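/- arXiv:1612.07939 — 3 statements merged into one kernel-verified Lean document; each statement's English description precedes it below -/
import Mathlib

section
/- Let $(M,g)$ be a Riemannian manifold with boundary, let $\mu$ be a smooth function with $\mu|_{\partial M} = 0$ and $\partial_\nu \mu|_{\partial M} = 0$, and let $\tilde{g} = e^{2\mu} g$. If $f$ is a smooth function on $M$ and $\tilde{\partial}_n$ denotes differentiation along $\tilde{g}$-unit-speed geodesics normal to $\partial M$ with respect to $\tilde{g}$, then $\tilde{\partial}_n f|_{\partial M} = \partial_n f|_{\partial M}$ and $\tilde{\partial}_n^2 f|_{\partial M} = \partial_n^2 f|_{\partial M}$, where $\partial_n$ is the corresponding normal derivative with respect to $g$-boundary normal coordinates. -/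
open scoped BigOperators
open MeasureTheory

noncomputable section

/-- Points of `ℝⁿ` in coordinates. -/
abbrev Vec (n : ℕ) := Fin n → ℝ

variable {n : ℕ}

/-- Partial derivative `∂_j f` in coordinates. -/
def pd (f : Vec n → ℝ) (j : Fin n) (x : Vec n) : ℝ :=
  fderiv ℝ f x (Pi.single j 1)

/-- Inverse metric `g^{jk}`. -/
def ginv (g : Vec n → Matrix (Fin n) (Fin n) ℝ) (x : Vec n) : Matrix (Fin n) (Fin n) ℝ :=
  (g x)⁻¹

/-- Christoffel symbols `Γ^l_{jk}` of the Levi-Civita connection of `g` in coordinates. -/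
def christoffel (g : Vec n → Matrix (Fin n) (Fin n) ℝ) (l j k : Fin n) (x : Vec n) : ℝ :=
  (1/2) * ∑ m, ginv g x l m *
    (pd (fun y => g y k m) j x + pd (fun y => g y j m) k x - pd (fun y => g y j k) m x)

/-- Laplace-Beltrami operator (negative spectrum convention):
`Δ_g f = g^{jk} (∂_{jk} f - Γ^l_{jk} ∂_l f)`. -/
def laplaceBeltrami (g : Vec n → Matrix (Fin n) (Fin n) ℝ) (f : Vec n → ℝ) (x : Vec n) : ℝ :=
  ∑ j, ∑ k, ginv g x j k *
    (pd (pd f j) k x - ∑ l, christoffel g l j k x * pd f l x)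

/-- Riemann curvature tensor `R^l_{ijk}` in coordinates. -/
def riemann (g : Vec n → Matrix (Fin n) (Fin n) ℝ) (l i j k : Fin n) (x : Vec n) : ℝ :=
  pd (christoffel g l j k) i x - pd (christoffel g l i k) j x
    + ∑ m, christoffel g l i m x * christoffel g m j k x
    - ∑ m, christoffel g l j m x * christoffel g m i k x

/-- Scalar curvature `S_g = g^{jk} R_{jk}` where `R_{jk} = R^i_{ijk}`. -/
def scalarCurvature (g : Vec n → Matrix (Fin n) (Fin n) ℝ) (x : Vec n) : ℝ :=
  ∑ j, ∑ k, ginv g x j k * ∑ i, riemann g i i j k x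

/-- The conformal Laplacian `L_g u = -Δ_g u + ((n-2)/(4(n-1))) S_g u`. -/
def confLaplacian (g : Vec n → Matrix (Fin n) (Fin n) ℝ) (f : Vec n → ℝ) (x : Vec n) : ℝ :=
  - laplaceBeltrami g f x
    + (((n : ℝ) - 2) / (4 * ((n : ℝ) - 1))) * scalarCurvature g x * f x

/-! The conformal factor `e^{2μ}` is stationary at boundary points: `μ` vanishes on the boundary
hyperplane, so its tangential derivatives vanish there, and its normal derivative vanishes by
assumption. In `g`-boundary normal coordinates the last row of `g̃ = e^{2μ} g` is `e^{2μ} δ_{n·}`,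
hence stationary at `p` as well, and this kills every `Γ̃^l_{nn}(p)`. The geodesic equation then
gives `η''(0) = 0`, so the chain rule for `f ∘ η` with `η'(0) = ∂_n` leaves exactly `∂_n f(p)` and
`∂_n² f(p)`. -/

theorem fderiv_apply_eq_sum_pd (f : Vec n → ℝ) (x v : Vec n) :
    fderiv ℝ f x v = ∑ l, pd f l x * v l := by
  have hv : v = ∑ l, v l • (Pi.single l 1 : Vec n) := by
    ext j
    simp [Pi.single_apply]
  conv_lhs => rw [hv]
  simp [pd, map_sum, mul_comm]

theorem pd_eq_zero_of_forall_line {μ : Vec n → ℝ} {x : Vec n} {j : Fin n}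
    (hμ : DifferentiableAt ℝ μ x) (hline : ∀ t : ℝ, μ (x + t • Pi.single j 1) = μ x) :
    pd μ j x = 0 := by
  rw [pd, ← hμ.lineDeriv_eq_fderiv, lineDeriv]
  simp [hline]

theorem fderiv_eq_zero_of_eq_zero_on_hyperplane {μ : Vec n → ℝ} {x : Vec n} {i : Fin n}
    (hμ : DifferentiableAt ℝ μ x) (hzero : ∀ y : Vec n, y i = 0 → μ y = 0) (hx : x i = 0)
    (hnormal : pd μ i x = 0) : fderiv ℝ μ x = 0 := by
  have htangent : ∀ j, j ≠ i → pd μ j x = 0 := fun j hji =>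
    pd_eq_zero_of_forall_line hμ fun t => by
      rw [hzero x hx, hzero]
      simp [hx, hji.symm]
  have hpd : ∀ j, pd μ j x = 0 := fun j => by
    rcases eq_or_ne j i with rfl | hji
    exacts [hnormal, htangent j hji]
  ext1 v
  simp [fderiv_apply_eq_sum_pd, hpd]

theorem christoffel_eq_zero_of_fderiv_row_eq_zero (G : Vec n → Matrix (Fin n) (Fin n) ℝ)
    {i : Fin n} {x : Vec n} (hrow : ∀ m, fderiv ℝ (fun y => G y i m) x = 0) (l : Fin n) :
    christoffel G l i i x = 0 := by
  rw [christoffel]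
  simp [pd, hrow]

theorem hasDerivAt_comp_curve {f : Vec n → ℝ} {η : ℝ → Vec n} {s : ℝ}
    (hf : DifferentiableAt ℝ f (η s)) (hη : DifferentiableAt ℝ η s) :
    HasDerivAt (fun t => f (η t)) (∑ l, pd f l (η s) * deriv (fun r => η r l) s) s := by
  have hη' : HasDerivAt η (fun l => deriv (fun r => η r l) s) s :=
    hasDerivAt_pi.2 fun l => (differentiableAt_pi.1 hη l).hasDerivAt
  have hcomp := hf.hasFDerivAt.comp_hasDerivAt s hη'
  rwa [fderiv_apply_eq_sum_pd] at hcomp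

theorem iteratedDeriv_two_comp_curve {f : Vec n → ℝ} {η : ℝ → Vec n}
    (hf : ContDiff ℝ 2 f) (hη : ContDiff ℝ 2 η) (s : ℝ) :
    iteratedDeriv 2 (fun t => f (η t)) s
      = ∑ l, ((∑ k, pd (pd f l) k (η s) * deriv (fun r => η r k) s) * deriv (fun r => η r l) s
          + pd f l (η s) * deriv (fun t => deriv (fun r => η r l) t) s) := by
  have hpdf : ∀ l, ContDiff ℝ 1 (pd f l) := fun l =>
    (ContinuousLinearMap.apply ℝ ℝ (Pi.single l 1 : Vec n)).contDiff.comp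
      (hf.fderiv_right (by norm_num))
  have hvel : ∀ l, Differentiable ℝ (fun t => deriv (fun r => η r l) t) := fun l =>
    (contDiff_succ_iff_deriv (n := 1).1 (contDiff_pi.1 hη l)).2.2.differentiable (by norm_num)
  have hfirst : deriv (fun t => f (η t)) = fun t => ∑ l, pd f l (η t) * deriv (fun r => η r l) t :=
    funext fun t => (hasDerivAt_comp_curve (hf.differentiable (by norm_num) _)
      (hη.differentiable (by norm_num) t)).deriv
  rw [iteratedDeriv_succ, iteratedDeriv_one, hfirst]
  refine (HasDerivAt.fun_sum fun l _ => ?_).deriv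
  exact (hasDerivAt_comp_curve ((hpdf l).differentiable one_ne_zero _)
    (hη.differentiable (by norm_num) s)).mul (hvel l s).hasDerivAt

theorem normal_derivative_comparison_general
    (n : ℕ) (g : Vec (n+1) → Matrix (Fin (n+1)) (Fin (n+1)) ℝ)
    (hsymm : ∀ x, (g x).IsSymm)
    (hbn : ∀ x, ∀ j : Fin (n+1), g x j (Fin.last n) = if j = Fin.last n then 1 else 0)
    (μ : Vec (n+1) → ℝ) (hμ : ContDiff ℝ (⊤ : ℕ∞) μ)
    (hμbd : ∀ p : Vec (n+1), p (Fin.last n) = 0 → μ p = 0 ∧ pd μ (Fin.last n) p = 0)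
    (f : Vec (n+1) → ℝ) (hf : ContDiff ℝ (⊤ : ℕ∞) f)
    (p : Vec (n+1)) (hp : p (Fin.last n) = 0)
    (η : ℝ → Vec (n+1)) (hη : ContDiff ℝ (⊤ : ℕ∞) η) (hη0 : η 0 = p)
    (hηvel : ∀ l : Fin (n+1),
      deriv (fun s => η s l) 0 = if l = Fin.last n then 1 else 0)
    (hgeo : ∀ (l : Fin (n+1)) (s : ℝ),
      deriv (fun t => deriv (fun r => η r l) t) s
        = - ∑ j, ∑ k, christoffel (fun y => Real.exp (2 * μ y) • g y) l j k (η s)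
            * deriv (fun r => η r j) s * deriv (fun r => η r k) s) :
    deriv (fun s => f (η s)) 0 = pd f (Fin.last n) p
    ∧ iteratedDeriv 2 (fun s => f (η s)) 0
        = pd (pd f (Fin.last n)) (Fin.last n) p := by
  have hμp : fderiv ℝ μ p = 0 :=
    fderiv_eq_zero_of_eq_zero_on_hyperplane (hμ.differentiable (by simp) p)
      (fun y hy => (hμbd y hy).1) hp (hμbd p hp).2
  have hrow : ∀ m, fderiv ℝ (fun y => (Real.exp (2 * μ y) • g y) (Fin.last n) m) p = 0 := by
    intro m
    have hrow_eq : (fun y => (Real.exp (2 * μ y) • g y) (Fin.last n) m)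
        = fun y => Real.exp (2 * μ y) * (if m = Fin.last n then 1 else 0) :=
      funext fun y => by rw [Matrix.smul_apply, (hsymm y).apply, hbn, smul_eq_mul]
    have hμd := (hμ.differentiable (by simp) p).hasFDerivAt
    rw [hμp] at hμd
    rw [hrow_eq]
    exact ((hμd.const_mul 2).exp.mul_const _).fderiv.trans (by simp)
  have hacc : ∀ l, deriv (fun t => deriv (fun r => η r l) t) 0 = 0 := fun l => by
    simp [hgeo, hη0, hηvel, christoffel_eq_zero_of_fderiv_row_eq_zero _ hrow]
  constructor
  · rw [(hasDerivAt_comp_curve (hf.differentiable (by simp) _)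
      (hη.differentiable (by simp) 0)).deriv]
    simp [hη0, hηvel]
  · rw [iteratedDeriv_two_comp_curve (hf.of_le (WithTop.coe_le_coe.2 le_top))
      (hη.of_le (WithTop.coe_le_coe.2 le_top))]
    simp [hη0, hηvel, hacc]

/-- comparison of the first two normal derivatives. In `g`-boundary normal
coordinates (total dimension `n+1`, boundary `{x^{last} = 0}`), if `μ` vanishes together with
its normal derivative on the boundary and `g̃ = e^{2μ} g`, then for any smooth `f` and any
`g̃`-geodesic `η` starting at a boundary point `p` with initial velocity the inward unit normal
`∂_n` (which is the `g̃`-unit normal since `μ(p)=0`), the derivatives of `s ↦ f(η(s))` at `s=0`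
(this is `∂̃_n^m f |_p`) satisfy `∂̃_n f|_p = ∂_n f|_p` and `∂̃_n² f|_p = ∂_n² f|_p`. -/
theorem normal_derivative_comparison
    (n : ℕ) (g : Vec (n+1) → Matrix (Fin (n+1)) (Fin (n+1)) ℝ)
    (hg : ∀ j k, ContDiff ℝ (⊤ : ℕ∞) (fun x => g x j k))
    (hsymm : ∀ x, (g x).IsSymm)
    (hpos : ∀ x, (g x).PosDef)
    (hbn : ∀ x, ∀ j : Fin (n+1), g x j (Fin.last n) = if j = Fin.last n then 1 else 0)
    (μ : Vec (n+1) → ℝ) (hμ : ContDiff ℝ (⊤ : ℕ∞) μ)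
    (hμbd : ∀ p : Vec (n+1), p (Fin.last n) = 0 → μ p = 0 ∧ pd μ (Fin.last n) p = 0)
    (f : Vec (n+1) → ℝ) (hf : ContDiff ℝ (⊤ : ℕ∞) f)
    (p : Vec (n+1)) (hp : p (Fin.last n) = 0)
    (η : ℝ → Vec (n+1)) (hη : ContDiff ℝ (⊤ : ℕ∞) η) (hη0 : η 0 = p)
    (hηvel : ∀ l : Fin (n+1),
      deriv (fun s => η s l) 0 = if l = Fin.last n then 1 else 0)
    (hgeo : ∀ (l : Fin (n+1)) (s : ℝ),
      deriv (fun t => deriv (fun r => η r l) t) s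
        = - ∑ j, ∑ k, christoffel (fun y => Real.exp (2 * μ y) • g y) l j k (η s)
            * deriv (fun r => η r j) s * deriv (fun r => η r k) s) :
    deriv (fun s => f (η s)) 0 = pd f (Fin.last n) p
    ∧ iteratedDeriv 2 (fun s => f (η s)) 0
        = pd (pd f (Fin.last n)) (Fin.last n) p :=
  normal_derivative_comparison_general n g hsymm hbn μ hμ hμbd f hf p hp η hη hη0 hηvel hgeo
end
end

section
/- Let $H_1, H_2$ be smooth positive definite symmetric matrix fields on an open subset $\Omega$ of the closed upper half-space $\mathbb{H}^n = \{x^n \geq 0\}$ intersecting $\{x^n = 0\}$, of the form $H_i = dx_n^2 + h_i(x', x_n)$, and suppose $H_1 = H_2 + O(x_n^\infty)$ on $\Gamma = \Omega \cap \{x^n = 0\}$ (all $x_n$-derivatives of $H_1 - H_2$ vanish on $\Gamma$). Let $f_1, f_2$ be smooth functions on $\Omega$ with $L_{H_i} f_i = 0$ in $\{x^n > 0\} \cap \Omega$, having the same Cauchy data on $\Gamma$: $f_1 = f_2$ and $\partial_{x_n} f_1 = \partial_{x_n} f_2$ on $\Gamma$. Then $f_1 = f_2 + O(x_n^\infty)$,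 i.e., all $x_n$-derivatives of $f_1 - f_2$ vanish on $\Gamma$. -/
open scoped BigOperators
open MeasureTheory

noncomputable section

variable {n : ℕ}

/-- Iterated partial derivative `∂_j^m f` in the fixed coordinate direction `j`. -/
def pdIter (f : Vec n → ℝ) (j : Fin n) : ℕ → Vec n → ℝ
  | 0 => f
  | m + 1 => pd (pdIter f j m) j


/-!
By induction, `D = f₁ - f₂` vanishes at the boundary to every order. For a metric in normal
form the conformal Laplacian is `L_H = -∂_ν² + P_H` with `P_H` of first order in `∂_ν`, so
`∂_ν² D = P_{H₁} D - L_{H₁} D` vanishes to order `m + 1` as soon as `D` vanishes to order `m + 2`;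
the Cauchy data start the induction. The error term `L_{H₁} D = L_{H₁} f₁ - L_{H₁} f₂` is flat:
`L_{H₁} f₁` and `L_{H₂} f₂` vanish on the open half-space, hence to infinite order on its
boundary, and `L_{H₁} f₂ - L_{H₂} f₂` is flat because agreement to infinite order is a
congruence for sums, products and partial derivatives of smooth functions, while `L_H f` is built
from `H`, `H⁻¹`, `f` and their derivatives by these operations.
-/

open Filter Topology

section PartialDerivatives

variable {N : ℕ} {U : Set (Vec N)} {f g : Vec N → ℝ} {j k ν : Fin N} {x : Vec N}

theorem differentiableAt_of_contDiffOn (hU : IsOpen U) (hf : ContDiffOn ℝ (⊤ : ℕ∞) f U)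
    (hx : x ∈ U) : DifferentiableAt ℝ f x :=
  (hf.contDiffAt (hU.mem_nhds hx)).differentiableAt (by simp)

@[fun_prop]
theorem contDiffOn_pd (hU : IsOpen U) (hf : ContDiffOn ℝ (⊤ : ℕ∞) f U) :
    ContDiffOn ℝ (⊤ : ℕ∞) (fun x => pd f j x) U :=
  (hf.fderiv_of_isOpen hU (by simp)).clm_apply contDiffOn_const

theorem pd_eqOn (hU : IsOpen U) (h : Set.EqOn f g U) : Set.EqOn (pd f j) (pd g j) U :=
  fun _ hx => by rw [pd, pd, (h.eventuallyEq_of_mem (hU.mem_nhds hx)).fderiv_eq]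

theorem pd_const (c : ℝ) : pd (fun _ => c) j = fun _ : Vec N => 0 := by
  ext x; simp [pd]

theorem pd_add (hf : DifferentiableAt ℝ f x) (hg : DifferentiableAt ℝ g x) :
    pd (fun y => f y + g y) j x = pd f j x + pd g j x := by
  simp [pd, fderiv_fun_add hf hg]

theorem pd_sub (hf : DifferentiableAt ℝ f x) (hg : DifferentiableAt ℝ g x) :
    pd (fun y => f y - g y) j x = pd f j x - pd g j x := by
  simp [pd, fderiv_fun_sub hf hg]

theorem pd_mul (hf : DifferentiableAt ℝ f x) (hg : DifferentiableAt ℝ g x) :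
    pd (fun y => f y * g y) j x = pd f j x * g x + f x * pd g j x := by
  simp only [pd, fderiv_fun_mul hf hg, add_apply, smul_apply, smul_eq_mul]
  ring

theorem pd_pd_comm (hU : IsOpen U) (hf : ContDiffOn ℝ (⊤ : ℕ∞) f U) (hx : x ∈ U) :
    pd (pd f j) k x = pd (pd f k) j x := by
  have hf' : DifferentiableAt ℝ (fderiv ℝ f) x :=
    ((hf.fderiv_of_isOpen (m := (⊤ : ℕ∞)) hU (by simp)).contDiffAt
      (hU.mem_nhds hx)).differentiableAt (by simp)
  have hsymm : IsSymmSndFDerivAt ℝ f x :=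
    (hf.contDiffAt (hU.mem_nhds hx)).isSymmSndFDerivAt
      (by rw [minSmoothness_of_isRCLikeNormedField]; exact WithTop.coe_le_coe.2 le_top)
  unfold pd
  rw [fderiv_clm_apply hf' (differentiableAt_const _),
    fderiv_clm_apply hf' (differentiableAt_const _)]
  simpa using hsymm (Pi.single k 1) (Pi.single j 1)

theorem pd_eq_zero_of_eq_zero_on_boundary (hU : IsOpen U) (hf : ∀ p ∈ U, p ν = 0 → f p = 0)
    (hj : j ≠ ν) (hx : x ∈ U) (hx0 : x ν = 0) : pd f j x = 0 := by
  by_cases hdf : DifferentiableAt ℝ f x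
  · have hline : Tendsto (fun t : ℝ => x + t • Pi.single j 1) (𝓝 0) (𝓝 x) := by
      have : Continuous fun t : ℝ => x + t • (Pi.single j 1 : Vec N) := by fun_prop
      simpa using this.tendsto 0
    have hzero : (fun t : ℝ => f (x + t • Pi.single j 1)) =ᶠ[𝓝 0] fun _ => 0 := by
      filter_upwards [hline.eventually_mem (hU.mem_nhds hx)] with t ht
      exact hf _ ht (by simp [hx0, hj.symm])
    rw [pd, ← hdf.lineDeriv_eq_fderiv, lineDeriv, hzero.deriv_eq, deriv_const]
  · simp [pd, fderiv_zero_of_not_differentiableAt hdf]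

theorem pdIter_succ' (m : ℕ) : pdIter f j (m + 1) = pdIter (pd f j) j m := by
  induction m with
  | zero => rfl
  | succ m ih => exact congrArg (pd · j) ih

end PartialDerivatives

section VanishesToOrder

variable {N : ℕ} {U : Set (Vec N)} {ν j k : Fin N} {m : ℕ} {f g a : Vec N → ℝ}

def VanishesToOrder (U : Set (Vec N)) (ν : Fin N) (m : ℕ) (f : Vec N → ℝ) : Prop :=
  ∀ i < m, ∀ p ∈ U, p ν = 0 → pdIter f ν i p = 0

theorem vanishesToOrder_zero : VanishesToOrder U ν 0 f := fun _ hi => absurd hi (by omega)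

theorem vanishesToOrder_succ_iff :
    VanishesToOrder U ν (m + 1) f ↔
      (∀ p ∈ U, p ν = 0 → f p = 0) ∧ VanishesToOrder U ν m (pd f ν) := by
  refine ⟨fun h => ⟨h 0 m.succ_pos, fun i hi => ?_⟩, fun ⟨h₀, h⟩ i hi => ?_⟩
  · rw [← pdIter_succ']; exact h (i + 1) (by omega)
  · cases i with
    | zero => exact h₀
    | succ i => rw [pdIter_succ']; exact h i (by omega)

theorem VanishesToOrder.mono (h : VanishesToOrder U ν m f) {m' : ℕ} (hm : m' ≤ m) :
    VanishesToOrder U ν m' f :=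
  fun i hi => h i (by omega)

theorem VanishesToOrder.congr (hU : IsOpen U) (h : VanishesToOrder U ν m f)
    (hfg : Set.EqOn f g U) : VanishesToOrder U ν m g := by
  induction m generalizing f g with
  | zero => exact vanishesToOrder_zero
  | succ m ih =>
    rw [vanishesToOrder_succ_iff] at h ⊢
    exact ⟨fun p hp hp0 => hfg hp ▸ h.1 p hp hp0, ih h.2 (pd_eqOn hU hfg)⟩

theorem vanishesToOrder_const_zero : VanishesToOrder U ν m fun _ => 0 := by
  induction m with
  | zero => exact vanishesToOrder_zero
  | succ m ih => exact vanishesToOrder_succ_iff.2 ⟨fun _ _ _ => rfl, by rwa [pd_const]⟩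

theorem VanishesToOrder.add (hU : IsOpen U) (hfs : ContDiffOn ℝ (⊤ : ℕ∞) f U)
    (hgs : ContDiffOn ℝ (⊤ : ℕ∞) g U) (hf : VanishesToOrder U ν m f)
    (hg : VanishesToOrder U ν m g) : VanishesToOrder U ν m fun x => f x + g x := by
  induction m generalizing f g with
  | zero => exact vanishesToOrder_zero
  | succ m ih =>
    rw [vanishesToOrder_succ_iff] at hf hg ⊢
    refine ⟨fun p hp hp0 => by simp [hf.1 p hp hp0, hg.1 p hp hp0], ?_⟩
    refine (ih (contDiffOn_pd hU hfs) (contDiffOn_pd hU hgs) hf.2 hg.2).congr hU fun x hx => ?_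
    exact (pd_add (differentiableAt_of_contDiffOn hU hfs hx)
      (differentiableAt_of_contDiffOn hU hgs hx)).symm

theorem VanishesToOrder.mul_left (hU : IsOpen U) (has : ContDiffOn ℝ (⊤ : ℕ∞) a U)
    (hfs : ContDiffOn ℝ (⊤ : ℕ∞) f U) (hf : VanishesToOrder U ν m f) :
    VanishesToOrder U ν m fun x => a x * f x := by
  induction m generalizing a f with
  | zero => exact vanishesToOrder_zero
  | succ m ih =>
    have hf' := vanishesToOrder_succ_iff.1 hf
    refine vanishesToOrder_succ_iff.2 ⟨fun p hp hp0 => by simp [hf'.1 p hp hp0], ?_⟩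
    have has' : ContDiffOn ℝ (⊤ : ℕ∞) (pd a ν) U := contDiffOn_pd hU has
    have hfs' : ContDiffOn ℝ (⊤ : ℕ∞) (pd f ν) U := contDiffOn_pd hU hfs
    have hleibniz := (ih has' hfs (hf.mono m.le_succ)).add hU (has'.mul hfs) (has.mul hfs')
      (ih has hfs' hf'.2)
    refine hleibniz.congr hU fun x hx => ?_
    exact (pd_mul (differentiableAt_of_contDiffOn hU has hx)
      (differentiableAt_of_contDiffOn hU hfs hx)).symm

theorem VanishesToOrder.sub (hU : IsOpen U) (hfs : ContDiffOn ℝ (⊤ : ℕ∞) f U)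
    (hgs : ContDiffOn ℝ (⊤ : ℕ∞) g U) (hf : VanishesToOrder U ν m f)
    (hg : VanishesToOrder U ν m g) : VanishesToOrder U ν m fun x => f x - g x :=
  (hf.add hU hfs (by fun_prop) (hg.mul_left hU contDiffOn_const hgs (a := fun _ => -1))).congr
    hU fun x _ => by ring

theorem VanishesToOrder.sum {ι : Type*} (hU : IsOpen U) (s : Finset ι) {F : ι → Vec N → ℝ}
    (hFs : ∀ i ∈ s, ContDiffOn ℝ (⊤ : ℕ∞) (F i) U)
    (hF : ∀ i ∈ s, VanishesToOrder U ν m (F i)) :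
    VanishesToOrder U ν m fun x => ∑ i ∈ s, F i x := by
  classical
  induction s using Finset.induction_on with
  | empty => simpa using vanishesToOrder_const_zero
  | insert i s hi ih =>
    simp only [Finset.sum_insert hi]
    simp only [Finset.mem_insert, forall_eq_or_imp] at hFs hF
    exact hF.1.add hU hFs.1 (ContDiffOn.sum hFs.2) (ih hFs.2 hF.2)

theorem VanishesToOrder.pd_of_ne (hU : IsOpen U) (hfs : ContDiffOn ℝ (⊤ : ℕ∞) f U)
    (hf : VanishesToOrder U ν m f) (hj : j ≠ ν) : VanishesToOrder U ν m (pd f j) := by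
  induction m generalizing f with
  | zero => exact vanishesToOrder_zero
  | succ m ih =>
    rw [vanishesToOrder_succ_iff] at hf ⊢
    exact ⟨fun p hp hp0 => pd_eq_zero_of_eq_zero_on_boundary hU hf.1 hj hp hp0,
      (ih (contDiffOn_pd hU hfs) hf.2).congr hU fun x hx => pd_pd_comm hU hfs hx⟩

theorem VanishesToOrder.pd (hU : IsOpen U) (hfs : ContDiffOn ℝ (⊤ : ℕ∞) f U)
    (hf : VanishesToOrder U ν (m + 1) f) (j : Fin N) : VanishesToOrder U ν m (pd f j) := by
  by_cases hj : j = ν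
  · exact hj ▸ (vanishesToOrder_succ_iff.1 hf).2
  · exact (hf.mono m.le_succ).pd_of_ne hU hfs hj

theorem vanishesToOrder_pd_pd (hU : IsOpen U) (hfs : ContDiffOn ℝ (⊤ : ℕ∞) f U)
    (hf : VanishesToOrder U ν (m + 2) f) (hjk : ¬(j = ν ∧ k = ν)) :
    VanishesToOrder U ν (m + 1) (pd (pd f j) k) := by
  by_cases hk : k = ν
  · subst hk
    exact (hf.pd_of_ne hU hfs fun hj => hjk ⟨hj, rfl⟩).pd hU (contDiffOn_pd hU hfs) k
  · exact (hf.pd hU hfs j).pd_of_ne hU (contDiffOn_pd hU hfs) hk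

theorem vanishesToOrder_of_pd_pd (h₂ : VanishesToOrder U ν 2 f)
    (hstep : ∀ m, VanishesToOrder U ν (m + 2) f →
      VanishesToOrder U ν (m + 1) (pd (pd f ν) ν))
    (m : ℕ) : VanishesToOrder U ν m f := by
  obtain ⟨h₀, h₁⟩ := vanishesToOrder_succ_iff.1 h₂
  have hf : ∀ m, VanishesToOrder U ν (m + 2) f := by
    intro m
    induction m with
    | zero => exact h₂
    | succ m ih =>
      exact vanishesToOrder_succ_iff.2
        ⟨h₀, vanishesToOrder_succ_iff.2 ⟨(vanishesToOrder_succ_iff.1 h₁).1, hstep m ih⟩⟩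
  exact (hf m).mono (by omega)

end VanishesToOrder

structure AgreeToInfiniteOrder {N : ℕ} (U : Set (Vec N)) (ν : Fin N) (f g : Vec N → ℝ) :
    Prop where
  contDiffOn_left : ContDiffOn ℝ (⊤ : ℕ∞) f U
  contDiffOn_right : ContDiffOn ℝ (⊤ : ℕ∞) g U
  vanishesToOrder (m : ℕ) : VanishesToOrder U ν m fun x => f x - g x

namespace AgreeToInfiniteOrder

variable {N : ℕ} {U : Set (Vec N)} {ν : Fin N} {f g h f₁ f₂ g₁ g₂ : Vec N → ℝ}

theorem refl (hf : ContDiffOn ℝ (⊤ : ℕ∞) f U) : AgreeToInfiniteOrder U ν f f :=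
  ⟨hf, hf, fun _ => by simpa using vanishesToOrder_const_zero⟩

theorem congr (hU : IsOpen U) (h : AgreeToInfiniteOrder U ν f g) {f' g' : Vec N → ℝ}
    (hf : Set.EqOn f f' U) (hg : Set.EqOn g g' U) : AgreeToInfiniteOrder U ν f' g' :=
  ⟨h.contDiffOn_left.congr fun x hx => (hf hx).symm,
    h.contDiffOn_right.congr fun x hx => (hg hx).symm,
    fun m => (h.vanishesToOrder m).congr hU fun x hx => by simp only [hf hx, hg hx]⟩

theorem add (hU : IsOpen U) (hf : AgreeToInfiniteOrder U ν f₁ f₂)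
    (hg : AgreeToInfiniteOrder U ν g₁ g₂) :
    AgreeToInfiniteOrder U ν (fun x => f₁ x + g₁ x) (fun x => f₂ x + g₂ x) := by
  have hfs := hf.contDiffOn_left.sub hf.contDiffOn_right
  have hgs := hg.contDiffOn_left.sub hg.contDiffOn_right
  refine ⟨hf.1.add hg.1, hf.2.add hg.2, fun m => ?_⟩
  exact ((hf.vanishesToOrder m).add hU hfs hgs (hg.vanishesToOrder m)).congr hU
    fun x _ => by ring

theorem mul (hU : IsOpen U) (hf : AgreeToInfiniteOrder U ν f₁ f₂)
    (hg : AgreeToInfiniteOrder U ν g₁ g₂) :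
    AgreeToInfiniteOrder U ν (fun x => f₁ x * g₁ x) (fun x => f₂ x * g₂ x) := by
  have hfs := hf.contDiffOn_left.sub hf.contDiffOn_right
  have hgs := hg.contDiffOn_left.sub hg.contDiffOn_right
  refine ⟨hf.1.mul hg.1, hf.2.mul hg.2, fun m => ?_⟩
  exact (((hg.vanishesToOrder m).mul_left hU hf.1 hgs).add hU (hf.1.mul hgs) (hg.2.mul hfs)
    ((hf.vanishesToOrder m).mul_left hU hg.2 hfs)).congr hU fun x _ => by ring

theorem const (c : ℝ) : AgreeToInfiniteOrder U ν (fun _ => c) (fun _ => c) :=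
  refl contDiffOn_const

theorem neg (hU : IsOpen U) (hf : AgreeToInfiniteOrder U ν f g) :
    AgreeToInfiniteOrder U ν (fun x => -f x) (fun x => -g x) :=
  ((const (-1)).mul hU hf).congr hU (fun _ _ => by ring) fun _ _ => by ring

theorem sub (hU : IsOpen U) (hf : AgreeToInfiniteOrder U ν f₁ f₂)
    (hg : AgreeToInfiniteOrder U ν g₁ g₂) :
    AgreeToInfiniteOrder U ν (fun x => f₁ x - g₁ x) (fun x => f₂ x - g₂ x) :=
  (hf.add hU (hg.neg hU)).congr hU (fun _ _ => by ring) fun _ _ => by ring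

theorem symm (hU : IsOpen U) (h : AgreeToInfiniteOrder U ν f g) : AgreeToInfiniteOrder U ν g f :=
  ⟨h.2, h.1, fun m => ((refl h.2).sub hU h |>.vanishesToOrder m).congr hU fun x _ => by ring⟩

theorem trans (hU : IsOpen U) (hfg : AgreeToInfiniteOrder U ν f g)
    (hgh : AgreeToInfiniteOrder U ν g h) : AgreeToInfiniteOrder U ν f h :=
  ⟨hfg.1, hgh.2, fun m => ((hfg.add hU hgh).vanishesToOrder m).congr hU fun x _ => by ring⟩

theorem sum {ι : Type*} (hU : IsOpen U) (s : Finset ι) {F G : ι → Vec N → ℝ}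
    (h : ∀ i ∈ s, AgreeToInfiniteOrder U ν (F i) (G i)) :
    AgreeToInfiniteOrder U ν (fun x => ∑ i ∈ s, F i x) (fun x => ∑ i ∈ s, G i x) := by
  refine ⟨ContDiffOn.sum fun i hi => (h i hi).1, ContDiffOn.sum fun i hi => (h i hi).2,
    fun m => ?_⟩
  refine (VanishesToOrder.sum hU s (fun i hi => (h i hi).1.sub (h i hi).2)
    fun i hi => (h i hi).vanishesToOrder m).congr hU fun x _ => ?_
  simp [Finset.sum_sub_distrib]

theorem pd (hU : IsOpen U) (h : AgreeToInfiniteOrder U ν f g) (j : Fin N) :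
    AgreeToInfiniteOrder U ν (_root_.pd f j) (_root_.pd g j) := by
  refine ⟨contDiffOn_pd hU h.1, contDiffOn_pd hU h.2, fun m => ?_⟩
  refine ((h.vanishesToOrder (m + 1)).pd hU (h.1.sub h.2) j).congr hU fun x hx => ?_
  exact pd_sub (differentiableAt_of_contDiffOn hU h.1 hx)
    (differentiableAt_of_contDiffOn hU h.2 hx)

end AgreeToInfiniteOrder

section Boundary

variable {N : ℕ} {U : Set (Vec N)} {ν : Fin N} {m : ℕ} {f : Vec N → ℝ}

theorem subset_closure_inter_pos (hU : IsOpen U) :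
    U ∩ {x | 0 ≤ x ν} ⊆ closure (U ∩ {x | 0 < x ν}) := by
  have hclosure : closure {x : Vec N | 0 < x ν} = {x | 0 ≤ x ν} := by
    have := (isOpenMap_eval (X := fun _ : Fin N => ℝ) ν).preimage_closure_eq_closure_preimage
      (continuous_apply ν) (Set.Ioi 0)
    rw [closure_Ioi] at this
    exact this.symm
  rw [← hclosure]
  exact hU.inter_closure

theorem vanishesToOrder_of_eq_zero_on_pos (hU : IsOpen U) (hfs : ContDiffOn ℝ (⊤ : ℕ∞) f U)
    (hf : ∀ x ∈ U, 0 < x ν → f x = 0) : VanishesToOrder U ν m f := by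
  induction m generalizing f with
  | zero => exact vanishesToOrder_zero
  | succ m ih =>
    have hf' : Set.EqOn f (fun _ => 0) (U ∩ {x | 0 < x ν}) := fun x hx => hf x hx.1 hx.2
    refine vanishesToOrder_succ_iff.2 ⟨fun p hp hp0 => ?_, ih (contDiffOn_pd hU hfs) ?_⟩
    · exact hf'.of_subset_closure (t := U ∩ {x | 0 ≤ x ν})
        (hfs.continuousOn.mono Set.inter_subset_left) continuousOn_const
        (Set.inter_subset_inter_right _ fun x (hx : 0 < x ν) => hx.le)
        (subset_closure_inter_pos hU) ⟨hp, hp0.ge⟩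
    · intro x hx hx0
      have hpos : IsOpen (U ∩ {x | 0 < x ν}) :=
        hU.inter (isOpen_lt continuous_const (continuous_apply ν))
      rw [pd_eqOn hpos hf' ⟨hx, hx0⟩, pd_const]

theorem agreeToInfiniteOrder_zero_of_eq_zero_on_pos (hU : IsOpen U)
    (hfs : ContDiffOn ℝ (⊤ : ℕ∞) f U) (hf : ∀ x ∈ U, 0 < x ν → f x = 0) :
    AgreeToInfiniteOrder U ν f fun _ => 0 :=
  ⟨hfs, contDiffOn_const, fun _ => by simpa using vanishesToOrder_of_eq_zero_on_pos hU hfs hf⟩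

end Boundary

section Metric

variable {N : ℕ} {U : Set (Vec N)} {ν : Fin N}
  {H H₁ H₂ : Vec N → Matrix (Fin N) (Fin N) ℝ}

open AgreeToInfiniteOrder Finset

theorem contDiffOn_det (hHs : ∀ a b, ContDiffOn ℝ (⊤ : ℕ∞) (fun x => H x a b) U) :
    ContDiffOn ℝ (⊤ : ℕ∞) (fun x => (H x).det) U := by
  simp only [Matrix.det_apply]
  fun_prop

theorem contDiffOn_ginv (hHs : ∀ a b, ContDiffOn ℝ (⊤ : ℕ∞) (fun x => H x a b) U)
    (hdet : ∀ x ∈ U, (H x).det ≠ 0) (a b : Fin N) :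
    ContDiffOn ℝ (⊤ : ℕ∞) (fun x => ginv H x a b) U := by
  have hadj : ContDiffOn ℝ (⊤ : ℕ∞) (fun x => (H x).adjugate a b) U := by
    simp only [Matrix.adjugate_apply]
    exact contDiffOn_det fun c d => by simp only [Matrix.updateRow_apply]; split_ifs <;> fun_prop
  refine (((contDiffOn_det hHs).inv hdet).mul hadj).congr fun x _ => ?_
  simp [ginv, Matrix.inv_def, Ring.inverse_eq_inv']

theorem contDiffOn_christoffel (hU : IsOpen U)
    (hHs : ∀ a b, ContDiffOn ℝ (⊤ : ℕ∞) (fun x => H x a b) U)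
    (hdet : ∀ x ∈ U, (H x).det ≠ 0)
    (l j k : Fin N) : ContDiffOn ℝ (⊤ : ℕ∞) (christoffel H l j k) U := by
  have := contDiffOn_ginv hHs hdet
  unfold christoffel
  fun_prop (disch := assumption)

theorem contDiffOn_scalarCurvature (hU : IsOpen U)
    (hHs : ∀ a b, ContDiffOn ℝ (⊤ : ℕ∞) (fun x => H x a b) U)
    (hdet : ∀ x ∈ U, (H x).det ≠ 0) :
    ContDiffOn ℝ (⊤ : ℕ∞) (scalarCurvature H) U := by
  have := contDiffOn_ginv hHs hdet
  have := contDiffOn_christoffel hU hHs hdet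
  unfold scalarCurvature riemann
  fun_prop (disch := assumption)

theorem contDiffOn_confLaplacian (hU : IsOpen U)
    (hHs : ∀ a b, ContDiffOn ℝ (⊤ : ℕ∞) (fun x => H x a b) U)
    (hdet : ∀ x ∈ U, (H x).det ≠ 0)
    {f : Vec N → ℝ} (hf : ContDiffOn ℝ (⊤ : ℕ∞) f U) :
    ContDiffOn ℝ (⊤ : ℕ∞) (confLaplacian H f) U := by
  have := contDiffOn_ginv hHs hdet
  have := contDiffOn_christoffel hU hHs hdet
  have := contDiffOn_scalarCurvature hU hHs hdet
  unfold confLaplacian laplaceBeltrami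
  fun_prop (disch := assumption)

theorem agreeToInfiniteOrder_ginv (hU : IsOpen U)
    (hH : ∀ a b, AgreeToInfiniteOrder U ν (fun x => H₁ x a b) (fun x => H₂ x a b))
    (hdet₁ : ∀ x ∈ U, (H₁ x).det ≠ 0) (hdet₂ : ∀ x ∈ U, (H₂ x).det ≠ 0)
    (a b : Fin N) :
    AgreeToInfiniteOrder U ν (fun x => ginv H₁ x a b) (fun x => ginv H₂ x a b) := by
  have hg₁ := contDiffOn_ginv (fun a b => (hH a b).1) hdet₁
  have hg₂ := contDiffOn_ginv (fun a b => (hH a b).2) hdet₂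
  -- `H₁⁻¹ = H₁⁻¹ H₂ H₂⁻¹` and `H₁⁻¹ H₁ H₂⁻¹ = H₂⁻¹` differ only in the middle
  have hsandwich := sum hU univ fun d _ =>
    (sum hU univ fun c _ => (refl (hg₁ a c)).mul hU ((hH c d).symm hU)).mul hU (refl (hg₂ d b))
  refine hsandwich.congr hU (fun x hx => ?_) fun x hx => ?_
  · have h : ((H₁ x)⁻¹ * H₂ x * (H₂ x)⁻¹) a b = (H₁ x)⁻¹ a b := by
      rw [Matrix.mul_nonsing_inv_cancel_right _ _ (isUnit_iff_ne_zero.2 (hdet₂ x hx))]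
    simpa only [Matrix.mul_apply, ginv] using h
  · have h : ((H₁ x)⁻¹ * H₁ x * (H₂ x)⁻¹) a b = (H₂ x)⁻¹ a b := by
      rw [Matrix.nonsing_inv_mul _ (isUnit_iff_ne_zero.2 (hdet₁ x hx)), Matrix.one_mul]
    simpa only [Matrix.mul_apply, ginv] using h

theorem agreeToInfiniteOrder_christoffel (hU : IsOpen U)
    (hH : ∀ a b, AgreeToInfiniteOrder U ν (fun x => H₁ x a b) (fun x => H₂ x a b))
    (hg : ∀ a b, AgreeToInfiniteOrder U ν (fun x => ginv H₁ x a b) fun x => ginv H₂ x a b)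
    (l j k : Fin N) :
    AgreeToInfiniteOrder U ν (christoffel H₁ l j k) (christoffel H₂ l j k) :=
  (const _).mul hU <| sum hU univ fun m _ => (hg l m).mul hU <|
    (((hH k m).pd hU j).add hU ((hH j m).pd hU k)).sub hU ((hH j k).pd hU m)

theorem agreeToInfiniteOrder_riemann (hU : IsOpen U)
    (hH : ∀ a b, AgreeToInfiniteOrder U ν (fun x => H₁ x a b) (fun x => H₂ x a b))
    (hg : ∀ a b, AgreeToInfiniteOrder U ν (fun x => ginv H₁ x a b) fun x => ginv H₂ x a b)
    (l i j k : Fin N) :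
    AgreeToInfiniteOrder U ν (riemann H₁ l i j k) (riemann H₂ l i j k) := by
  have hΓ := agreeToInfiniteOrder_christoffel hU hH hg
  exact ((((hΓ l j k).pd hU i).sub hU ((hΓ l i k).pd hU j)).add hU
    (sum hU univ fun m _ => (hΓ l i m).mul hU (hΓ m j k))).sub hU
    (sum hU univ fun m _ => (hΓ l j m).mul hU (hΓ m i k))

theorem agreeToInfiniteOrder_scalarCurvature (hU : IsOpen U)
    (hH : ∀ a b, AgreeToInfiniteOrder U ν (fun x => H₁ x a b) (fun x => H₂ x a b))
    (hg : ∀ a b, AgreeToInfiniteOrder U ν (fun x => ginv H₁ x a b) fun x => ginv H₂ x a b) :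
    AgreeToInfiniteOrder U ν (scalarCurvature H₁) (scalarCurvature H₂) :=
  sum hU univ fun j _ => sum hU univ fun k _ => (hg j k).mul hU <|
    sum hU univ fun i _ => agreeToInfiniteOrder_riemann hU hH hg i i j k

theorem agreeToInfiniteOrder_confLaplacian (hU : IsOpen U)
    (hH : ∀ a b, AgreeToInfiniteOrder U ν (fun x => H₁ x a b) (fun x => H₂ x a b))
    (hg : ∀ a b, AgreeToInfiniteOrder U ν (fun x => ginv H₁ x a b) fun x => ginv H₂ x a b)
    {f₁ f₂ : Vec N → ℝ} (hf : AgreeToInfiniteOrder U ν f₁ f₂) :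
    AgreeToInfiniteOrder U ν (confLaplacian H₁ f₁) (confLaplacian H₂ f₂) := by
  have hΔ : AgreeToInfiniteOrder U ν (laplaceBeltrami H₁ f₁) (laplaceBeltrami H₂ f₂) :=
    sum hU univ fun j _ => sum hU univ fun k _ => (hg j k).mul hU <|
      ((hf.pd hU j).pd hU k).sub hU <| sum hU univ fun l _ =>
        (agreeToInfiniteOrder_christoffel hU hH hg l j k).mul hU (hf.pd hU l)
  exact (hΔ.neg hU).add hU
    (((const _).mul hU (agreeToInfiniteOrder_scalarCurvature hU hH hg)).mul hU hf)

end Metric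

section ConformalLaplacian

variable {N : ℕ} {U : Set (Vec N)} {ν : Fin N} {m : ℕ} {x : Vec N}
  {g : Vec N → Matrix (Fin N) (Fin N) ℝ} {D f₁ f₂ : Vec N → ℝ}

open Finset
open scoped Matrix

theorem ginv_apply_self_of_normal_form (hdet : (g x).det ≠ 0)
    (hform : ∀ j, g x j ν = if j = ν then 1 else 0) : ginv g x ν ν = 1 := by
  have hcol : g x *ᵥ Pi.single ν 1 = Pi.single ν 1 := by
    ext j
    simp [hform j, Pi.single_apply]
  have hinv : (g x)⁻¹ *ᵥ Pi.single ν 1 = Pi.single ν 1 := by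
    conv_lhs => rw [← hcol]
    rw [Matrix.mulVec_mulVec, Matrix.nonsing_inv_mul _ (isUnit_iff_ne_zero.2 hdet),
      Matrix.one_mulVec]
  simpa [ginv, Matrix.mulVec_single] using congrFun hinv ν

theorem confLaplacian_sub (hU : IsOpen U) (hf₁ : ContDiffOn ℝ (⊤ : ℕ∞) f₁ U)
    (hf₂ : ContDiffOn ℝ (⊤ : ℕ∞) f₂ U) :
    Set.EqOn (confLaplacian g fun x => f₁ x - f₂ x)
      (fun x => confLaplacian g f₁ x - confLaplacian g f₂ x) U := by
  have hpd : ∀ j,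
      Set.EqOn (pd (fun x => f₁ x - f₂ x) j) (fun x => pd f₁ j x - pd f₂ j x) U :=
    fun j x hx => pd_sub (differentiableAt_of_contDiffOn hU hf₁ hx)
      (differentiableAt_of_contDiffOn hU hf₂ hx)
  intro x hx
  have hpd_pd : ∀ j k,
      pd (pd (fun x => f₁ x - f₂ x) j) k x = pd (pd f₁ j) k x - pd (pd f₂ j) k x :=
    fun j k => (pd_eqOn hU (hpd j) hx).trans <|
      pd_sub (differentiableAt_of_contDiffOn hU (contDiffOn_pd hU hf₁) hx)
        (differentiableAt_of_contDiffOn hU (contDiffOn_pd hU hf₂) hx)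
  simp only [confLaplacian, laplaceBeltrami, hpd_pd, hpd _ hx, mul_sub, sum_sub_distrib]
  ring

theorem vanishesToOrder_pd_pd_of_confLaplacian (hU : IsOpen U)
    (hgs : ∀ a b, ContDiffOn ℝ (⊤ : ℕ∞) (fun x => g x a b) U)
    (hdet : ∀ x ∈ U, (g x).det ≠ 0)
    (hgν : ∀ x ∈ U, ginv g x ν ν = 1) (hDs : ContDiffOn ℝ (⊤ : ℕ∞) D U)
    (hD : VanishesToOrder U ν (m + 2) D) (hLD : VanishesToOrder U ν (m + 1) (confLaplacian g D)) :
    VanishesToOrder U ν (m + 1) (pd (pd D ν) ν) := by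
  have hginv := contDiffOn_ginv hgs hdet
  have hΓ := contDiffOn_christoffel hU hgs hdet
  have hS := contDiffOn_scalarCurvature hU hgs hdet
  have hL := contDiffOn_confLaplacian hU hgs hdet hDs
  have hpD := fun l => contDiffOn_pd (j := l) hU hDs
  have hpDs := fun j k => contDiffOn_pd (j := k) hU (hpD j)
  -- the only second normal derivative in `L_g D` has coefficient `ginv g x ν ν = 1`
  have hsecond : ∀ j k, VanishesToOrder U ν (m + 1) fun x =>
      (ginv g x j k - if j = ν ∧ k = ν then 1 else 0) * pd (pd D j) k x := by
    intro j k
    by_cases hjk : j = ν ∧ k = ν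
    · obtain ⟨rfl, rfl⟩ := hjk
      exact vanishesToOrder_const_zero.congr hU fun x hx => by simp [hgν x hx]
    · simpa [hjk] using
        (vanishesToOrder_pd_pd hU hDs hD hjk).mul_left hU (hginv j k) (hpDs j k)
  have hfirst : ∀ j k, VanishesToOrder U ν (m + 1) fun x =>
      ginv g x j k * ∑ l, christoffel g l j k x * pd D l x := fun j k =>
    (VanishesToOrder.sum hU univ (fun l _ => (hΓ l j k).mul (hpD l)) fun l _ =>
      (hD.pd hU hDs l).mul_left hU (hΓ l j k) (hpD l)).mul_left hU (hginv j k)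
        (ContDiffOn.sum fun l _ => (hΓ l j k).mul (hpD l))
  have hzeroth : VanishesToOrder U ν (m + 1) fun x =>
      ((N : ℝ) - 2) / (4 * ((N : ℝ) - 1)) * scalarCurvature g x * D x :=
    (hD.mono (by omega)).mul_left hU (contDiffOn_const.mul hS) hDs
  have hsum := (((VanishesToOrder.sum hU univ (fun j _ => ?_) fun j _ =>
    VanishesToOrder.sum hU univ (fun k _ => ?_) fun k _ => hfirst j k).add hU ?_ ?_ hzeroth).sub
      hU ?_ ?_ (VanishesToOrder.sum hU univ (fun j _ => ?_) fun j _ =>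
        VanishesToOrder.sum hU univ (fun k _ => ?_) fun k _ => hsecond j k)).sub hU ?_ hL hLD
  · refine hsum.congr hU fun x _ => ?_
    have hδ :
        ∑ j, ∑ k, (if j = ν ∧ k = ν then pd (pd D j) k x else 0) = pd (pd D ν) ν x := by
      simp [ite_and]
    simp only [confLaplacian, laplaceBeltrami, mul_sub, sub_mul, sum_sub_distrib, ite_mul,
      one_mul, zero_mul, hδ]
    ring
  all_goals fun_prop (disch := assumption)

end ConformalLaplacian

theorem solutions_agree_to_infinite_order_general
    (n : ℕ) (U : Set (Vec (n+1))) (hU : IsOpen U)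
    (H₁ H₂ : Vec (n+1) → Matrix (Fin (n+1)) (Fin (n+1)) ℝ)
    (hH₁ : ∀ j k, ContDiffOn ℝ (⊤ : ℕ∞) (fun x => H₁ x j k) U)
    (hH₂ : ∀ j k, ContDiffOn ℝ (⊤ : ℕ∞) (fun x => H₂ x j k) U)
    (hpos : ∀ x ∈ U, (H₁ x).PosDef ∧ (H₂ x).PosDef)
    (hform₁ : ∀ x ∈ U, ∀ j : Fin (n+1),
      H₁ x j (Fin.last n) = if j = Fin.last n then 1 else 0)
    (hjets : ∀ (m : ℕ) (j k : Fin (n+1)), ∀ p ∈ U, p (Fin.last n) = 0 →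
      pdIter (fun x => H₁ x j k - H₂ x j k) (Fin.last n) m p = 0)
    (f₁ f₂ : Vec (n+1) → ℝ)
    (hf₁ : ContDiffOn ℝ (⊤ : ℕ∞) f₁ U) (hf₂ : ContDiffOn ℝ (⊤ : ℕ∞) f₂ U)
    (heq₁ : ∀ x ∈ U, 0 < x (Fin.last n) → confLaplacian H₁ f₁ x = 0)
    (heq₂ : ∀ x ∈ U, 0 < x (Fin.last n) → confLaplacian H₂ f₂ x = 0)
    (hcauchy : ∀ p ∈ U, p (Fin.last n) = 0 →
      f₁ p = f₂ p ∧ pd f₁ (Fin.last n) p = pd f₂ (Fin.last n) p) :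
    ∀ m : ℕ, ∀ p ∈ U, p (Fin.last n) = 0 →
      pdIter (fun x => f₁ x - f₂ x) (Fin.last n) m p = 0 := by
  set ν := Fin.last n
  have hdet₁ : ∀ x ∈ U, (H₁ x).det ≠ 0 := fun x hx => (hpos x hx).1.det_pos.ne'
  have hdet₂ : ∀ x ∈ U, (H₂ x).det ≠ 0 := fun x hx => (hpos x hx).2.det_pos.ne'
  have hH : ∀ a b, AgreeToInfiniteOrder U ν (fun x => H₁ x a b) (fun x => H₂ x a b) :=
    fun a b => ⟨hH₁ a b, hH₂ a b, fun _ i _ p hp hp0 => hjets i a b p hp hp0⟩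
  have hLD : ∀ m, VanishesToOrder U ν m (confLaplacian H₁ fun x => f₁ x - f₂ x) := by
    have hL₁ := agreeToInfiniteOrder_zero_of_eq_zero_on_pos hU
      (contDiffOn_confLaplacian hU hH₁ hdet₁ hf₁) heq₁
    have hL₂ := agreeToInfiniteOrder_zero_of_eq_zero_on_pos hU
      (contDiffOn_confLaplacian hU hH₂ hdet₂ hf₂) heq₂
    have hL₁₂ := agreeToInfiniteOrder_confLaplacian hU hH
      (agreeToInfiniteOrder_ginv hU hH hdet₁ hdet₂) (.refl hf₂)
    exact fun m => ((hL₁.trans hU ((hL₁₂.trans hU hL₂).symm hU)).vanishesToOrder m).congr hU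
      (confLaplacian_sub hU hf₁ hf₂).symm
  have hD₂ : VanishesToOrder U ν 2 fun x => f₁ x - f₂ x := by
    refine vanishesToOrder_succ_iff.2 ⟨fun p hp hp0 => sub_eq_zero.2 (hcauchy p hp hp0).1,
      vanishesToOrder_succ_iff.2 ⟨fun p hp hp0 => ?_, vanishesToOrder_zero⟩⟩
    rw [pd_sub (differentiableAt_of_contDiffOn hU hf₁ hp)
      (differentiableAt_of_contDiffOn hU hf₂ hp)]
    exact sub_eq_zero.2 (hcauchy p hp hp0).2
  have hgν : ∀ x ∈ U, ginv H₁ x ν ν = 1 := fun x hx =>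
    ginv_apply_self_of_normal_form (hdet₁ x hx) (hform₁ x hx)
  exact fun m => vanishesToOrder_of_pd_pd hD₂
    (fun m hm =>
      vanishesToOrder_pd_pd_of_confLaplacian hU hH₁ hdet₁ hgν (hf₁.sub hf₂) hm (hLD _))
    (m + 1) m m.lt_succ_self

/-- if two metrics in boundary normal form `H_i = dx_n² + h_i` on an open set
`U` meeting the boundary `{x^{last} = 0}` of the upper half-space (dimension `n+1`) agree to
infinite order in the normal direction on `Γ = U ∩ {x^{last} = 0}`, and `f_1, f_2` solve
`L_{H_i} f_i = 0` in the interior part of `U` with the same Cauchy data on `Γ`, then `f_1`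
and `f_2` agree to infinite order in the normal direction on `Γ`. -/
theorem solutions_agree_to_infinite_order
    (n : ℕ) (U : Set (Vec (n+1))) (hU : IsOpen U)
    (H₁ H₂ : Vec (n+1) → Matrix (Fin (n+1)) (Fin (n+1)) ℝ)
    (hH₁ : ∀ j k, ContDiffOn ℝ (⊤ : ℕ∞) (fun x => H₁ x j k) U)
    (hH₂ : ∀ j k, ContDiffOn ℝ (⊤ : ℕ∞) (fun x => H₂ x j k) U)
    (hsymm : ∀ x ∈ U, (H₁ x).IsSymm ∧ (H₂ x).IsSymm)
    (hpos : ∀ x ∈ U, (H₁ x).PosDef ∧ (H₂ x).PosDef)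
    (hform₁ : ∀ x ∈ U, ∀ j : Fin (n+1),
      H₁ x j (Fin.last n) = if j = Fin.last n then 1 else 0)
    (hform₂ : ∀ x ∈ U, ∀ j : Fin (n+1),
      H₂ x j (Fin.last n) = if j = Fin.last n then 1 else 0)
    (hjets : ∀ (m : ℕ) (j k : Fin (n+1)), ∀ p ∈ U, p (Fin.last n) = 0 →
      pdIter (fun x => H₁ x j k - H₂ x j k) (Fin.last n) m p = 0)
    (f₁ f₂ : Vec (n+1) → ℝ)
    (hf₁ : ContDiffOn ℝ (⊤ : ℕ∞) f₁ U) (hf₂ : ContDiffOn ℝ (⊤ : ℕ∞) f₂ U)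
    (heq₁ : ∀ x ∈ U, 0 < x (Fin.last n) → confLaplacian H₁ f₁ x = 0)
    (heq₂ : ∀ x ∈ U, 0 < x (Fin.last n) → confLaplacian H₂ f₂ x = 0)
    (hcauchy : ∀ p ∈ U, p (Fin.last n) = 0 →
      f₁ p = f₂ p ∧ pd f₁ (Fin.last n) p = pd f₂ (Fin.last n) p) :
    ∀ m : ℕ, ∀ p ∈ U, p (Fin.last n) = 0 →
      pdIter (fun x => f₁ x - f₂ x) (Fin.last n) m p = 0 :=
  solutions_agree_to_infinite_order_general n U hU H₁ H₂ hH₁ hH₂ hpos hform₁ hjets f₁ f₂ hf₁ hf₂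
    heq₁ heq₂ hcauchy
end
end

section
/- Let $(M_1, g_1)$ and $(M_2, g_2)$ be Riemannian manifolds, $U_1 \subset M_1$, $U_2 \subset M_2$ open, and $J : U_1 \to U_2$ a diffeomorphism. Let $P_1, P_2$ be smooth positive functions on $U_1, U_2$ respectively and set $H_i(x,y) = G_i(x,y)/(P_i(x) P_i(y))$ where $G_i$ are functions on $U_i \times U_i$ off the diagonal satisfying the diagonal asymptotics $\lim_{y \to x} G_i(x,y)\, d_i(x,y)^{n-2} = c(n)$ with $c(n) = 1/((n-2)\omega_n)$, $n \geq 3$. If $H_1(x,y) = H_2(J(x), J(y))$ for all $x \neq y$ in $U_1$, then $J$ is conformal: $g_1 = c\, J^* g_2$ on $U_1$ with conformal factor $c(x) = \big( P_2(J(x)) / P_1(x) \big)^{4/(n-2)}$. -/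
open scoped BigOperators
open MeasureTheory

noncomputable section

variable {n : ℕ}

/-- Riemannian length of a path with respect to a metric `g` in coordinates. -/
def pathLength (g : Vec n → Matrix (Fin n) (Fin n) ℝ) (γ : ℝ → Vec n) : ℝ :=
  ∫ t in (0:ℝ)..1,
    Real.sqrt (∑ j, ∑ k, g (γ t) j k * deriv (fun s => γ s j) t * deriv (fun s => γ s k) t)

/-- Riemannian distance between `x` and `y` within the open set `U`: the infimum of
`g`-lengths of smooth paths from `x` to `y` staying in `U`. -/
def riemDistIn (g : Vec n → Matrix (Fin n) (Fin n) ℝ) (U : Set (Vec n)) (x y : Vec n) : ℝ :=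
  ⨅ γ : {γ : ℝ → Vec n // ContDiff ℝ (⊤ : ℕ∞) γ ∧ γ 0 = x ∧ γ 1 = y ∧
      ∀ t ∈ Set.Icc (0:ℝ) 1, γ t ∈ U},
    pathLength g γ.1

/-!
Near a point `x`, the Riemannian distance agrees to first order with the norm of the constant
metric `g x`: `d(x, y) / ‖y - x‖_{g x} → 1`. The upper bound comes from straight segments; for the
lower bound, a path either stays in a small ball on which `g` is comparable to `g x`, where its
length dominates the `g x`-length of its displacement, or it leaves that ball.

Along the ray `t ↦ x + t u` and its image under `J`, the distances therefore behave like
`t ‖u‖_{g₁}` and `t ‖DJ u‖_{g₂}`. Inserting this into the two diagonal asymptotics and into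
`H₁ = H₂ ∘ (J × J)` gives `P₁(x)² ‖u‖_{g₁}^{n-2} = P₂(J x)² ‖DJ u‖_{g₂}^{n-2}`, i.e.
`‖u‖²_{g₁} = (P₂(J x) / P₁(x))^{4/(n-2)} ‖DJ u‖²_{g₂}`, and polarization gives the claim.
-/

open Filter Topology Set

namespace Matrix

lemma PosSemidef.isSymm {ι : Type*} {M : Matrix ι ι ℝ} (hM : M.PosSemidef) : M.IsSymm :=
  isHermitian_iff_isSymm.1 hM.isHermitian

variable {ι : Type*} [Fintype ι] [DecidableEq ι]

def formNorm (M : Matrix ι ι ℝ) (v : ι → ℝ) : ℝ := √(M.toBilin' v v)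

lemma sum_sum_mul_eq_toBilin' (M : Matrix ι ι ℝ) (v w : ι → ℝ) :
    ∑ j, ∑ k, M j k * v j * w k = M.toBilin' v w := by
  simp only [toBilin'_apply, mul_comm (M _ _)]

lemma formNorm_nonneg (M : Matrix ι ι ℝ) (v : ι → ℝ) : 0 ≤ M.formNorm v := Real.sqrt_nonneg _

@[simp]
lemma formNorm_zero (M : Matrix ι ι ℝ) : M.formNorm 0 = 0 := by simp [formNorm]

lemma formNorm_smul (M : Matrix ι ι ℝ) (c : ℝ) (v : ι → ℝ) :
    M.formNorm (c • v) = |c| * M.formNorm v := by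
  rw [formNorm, formNorm, LinearMap.map_smul₂, map_smul, smul_eq_mul, smul_eq_mul,
    ← mul_assoc, ← sq, Real.sqrt_mul (sq_nonneg c), Real.sqrt_sq_eq_abs]

lemma continuous_uncurry_formNorm :
    Continuous fun p : Matrix ι ι ℝ × (ι → ℝ) => p.1.formNorm p.2 := by
  simp only [formNorm, toBilin'_apply']
  exact (continuous_snd.dotProduct (continuous_fst.matrix_mulVec continuous_snd)).sqrt

section Continuity

variable {X : Type*} [TopologicalSpace X] {M : X → Matrix ι ι ℝ} {v : X → ι → ℝ}

lemma _root_.Continuous.matrix_formNorm (hM : Continuous M) (hv : Continuous v) :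
    Continuous fun t => (M t).formNorm (v t) :=
  (continuous_uncurry_formNorm.comp (hM.prodMk hv) :)

lemma _root_.ContinuousOn.matrix_formNorm {s : Set X} (hM : ContinuousOn M s)
    (hv : ContinuousOn v s) : ContinuousOn (fun t => (M t).formNorm (v t)) s :=
  (continuous_uncurry_formNorm.comp_continuousOn (hM.prodMk hv) :)

end Continuity

lemma continuous_formNorm (M : Matrix ι ι ℝ) : Continuous M.formNorm :=
  continuous_const.matrix_formNorm continuous_id

lemma abs_toBilin'_self_le (M : Matrix ι ι ℝ) (v : ι → ℝ) :
    |M.toBilin' v v| ≤ (∑ i, ∑ j, |M i j|) * ‖v‖ ^ 2 := by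
  rw [toBilin'_apply, Finset.sum_mul]
  refine (Finset.abs_sum_le_sum_abs _ _).trans <| Finset.sum_le_sum fun i _ => ?_
  rw [Finset.sum_mul]
  refine (Finset.abs_sum_le_sum_abs _ _).trans <| Finset.sum_le_sum fun j _ => ?_
  rw [abs_mul, abs_mul, mul_comm |v i|, mul_assoc, sq]
  gcongr
  · simpa using norm_le_pi_norm v i
  · simpa using norm_le_pi_norm v j

lemma toBilin'_eq_mul_of_forall_self_eq {ι' : Type*} [Fintype ι'] [DecidableEq ι']
    {M₁ : Matrix ι ι ℝ} {M₂ : Matrix ι' ι' ℝ} (h₁ : M₁.IsSymm) (h₂ : M₂.IsSymm)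
    (L : (ι → ℝ) →ₗ[ℝ] ι' → ℝ) {κ : ℝ} (h : ∀ u, M₁.toBilin' u u = κ * M₂.toBilin' (L u) (L u))
    (v w : ι → ℝ) : M₁.toBilin' v w = κ * M₂.toBilin' (L v) (L w) := by
  rw [(isSymm_toBilin'_iff_isSymm.2 h₁).polarization,
    (isSymm_toBilin'_iff_isSymm.2 h₂).polarization, ← map_add, h, h, h]
  ring

namespace PosSemidef

variable {M : Matrix ι ι ℝ}

lemma toBilin'_self_nonneg (hM : M.PosSemidef) (v : ι → ℝ) : 0 ≤ M.toBilin' v v := by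
  simpa [toBilin'_apply'] using hM.dotProduct_mulVec_nonneg v

lemma formNorm_sq (hM : M.PosSemidef) (v : ι → ℝ) : M.formNorm v ^ 2 = M.toBilin' v v :=
  Real.sq_sqrt (hM.toBilin'_self_nonneg v)

lemma toBilin'_le_formNorm_mul (hM : M.PosSemidef) (v w : ι → ℝ) :
    M.toBilin' v w ≤ M.formNorm v * M.formNorm w := by
  refine abs_le_of_sq_le_sq' ?_ (mul_nonneg (formNorm_nonneg _ _) (formNorm_nonneg _ _)) |>.2
  rw [mul_pow, hM.formNorm_sq, hM.formNorm_sq]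
  exact M.toBilin'.apply_sq_le_of_symm hM.toBilin'_self_nonneg
    (LinearMap.BilinForm.isSymm_iff.1 (isSymm_toBilin'_iff_isSymm.2 hM.isSymm)) v w

open intervalIntegral in
lemma formNorm_sub_le_integral (hM : M.PosSemidef) {γ : ℝ → ι → ℝ} (hγ : ContDiff ℝ 1 γ)
    {T : ℝ} (hT : 0 ≤ T) :
    M.formNorm (γ T - γ 0) ≤ ∫ t in 0..T, M.formNorm (deriv γ t) := by
  set u := γ T - γ 0
  have hγ' : Continuous (deriv γ) := hγ.continuous_deriv le_rfl
  have hFTC : ∫ t in 0..T, deriv γ t = u :=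
    integral_deriv_eq_sub (fun t _ => hγ.differentiable one_ne_zero t) (hγ'.intervalIntegrable _ _)
  have hint : IntervalIntegrable (fun t => M.formNorm (deriv γ t)) MeasureTheory.volume 0 T :=
    (continuous_const.matrix_formNorm hγ').intervalIntegrable _ _
  have key : M.formNorm u ^ 2 ≤ M.formNorm u * ∫ t in 0..T, M.formNorm (deriv γ t) :=
    calc M.formNorm u ^ 2 = M.toBilin' u (∫ t in 0..T, deriv γ t) := by
          rw [hFTC, hM.formNorm_sq]
      _ = ∫ t in 0..T, M.toBilin' u (deriv γ t) :=
          ((M.toBilin' u).toContinuousLinearMap.intervalIntegral_comp_comm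
            (hγ'.intervalIntegrable _ _)).symm
      _ ≤ ∫ t in 0..T, M.formNorm u * M.formNorm (deriv γ t) :=
          integral_mono_on hT
            ((M.toBilin' u).toContinuousLinearMap.continuous.comp hγ' |>.intervalIntegrable _ _)
            (hint.const_mul _) fun t _ => hM.toBilin'_le_formNorm_mul u (deriv γ t)
      _ = M.formNorm u * ∫ t in 0..T, M.formNorm (deriv γ t) := integral_const_mul _ _
  have hI : 0 ≤ ∫ t in 0..T, M.formNorm (deriv γ t) :=
    integral_nonneg hT fun t _ => M.formNorm_nonneg _
  nlinarith [M.formNorm_nonneg u]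

end PosSemidef

namespace PosDef

variable {M : Matrix ι ι ℝ}

lemma formNorm_pos (hM : M.PosDef) {v : ι → ℝ} (hv : v ≠ 0) :
    0 < M.formNorm v :=
  Real.sqrt_pos.2 <| by simpa [toBilin'_apply'] using hM.dotProduct_mulVec_pos hv

lemma exists_pos_mul_norm_le_formNorm (hM : M.PosDef) :
    ∃ c > 0, ∀ v, c * ‖v‖ ≤ M.formNorm v := by
  obtain ⟨c, hc, hmin⟩ : ∃ c > 0, ∀ w ∈ Metric.sphere (0 : ι → ℝ) 1, c ≤ M.formNorm w := by
    rcases (Metric.sphere (0 : ι → ℝ) 1).eq_empty_or_nonempty with h | h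
    · exact ⟨1, one_pos, by simp [h]⟩
    obtain ⟨w₀, hw₀, hw₀min⟩ := (isCompact_sphere 0 1).exists_isMinOn h
      M.continuous_formNorm.continuousOn
    exact ⟨M.formNorm w₀, hM.formNorm_pos (ne_zero_of_mem_unit_sphere ⟨w₀, hw₀⟩), hw₀min⟩
  refine ⟨c, hc, fun v => ?_⟩
  rcases eq_or_ne v 0 with rfl | hv
  · simp
  have hnorm : 0 < ‖v‖ := norm_pos_iff.2 hv
  have := hmin (‖v‖⁻¹ • v) (by simp [norm_smul, hnorm.ne'])
  rw [formNorm_smul, abs_of_pos (inv_pos.2 hnorm), inv_mul_eq_div, le_div_iff₀ hnorm] at this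
  linarith

end PosDef

end Matrix

lemma Real.abs_sqrt_sub_sqrt_le {a b ε : ℝ} (hb : 0 ≤ b) (h : |a - b| ≤ ε * b) :
    |√a - √b| ≤ ε * √b := by
  rcases hb.eq_or_lt with rfl | hb
  · simp_all
  have hε : 0 ≤ ε := nonneg_of_mul_nonneg_left ((abs_nonneg _).trans h) hb
  have hsb := Real.sq_sqrt hb.le
  rw [abs_le] at h ⊢
  constructor
  · rcases le_or_gt 1 ε with h1 | h1
    · nlinarith [Real.sqrt_nonneg a, Real.sqrt_nonneg b]
    · have : (1 - ε) * √b ≤ √a := Real.le_sqrt_of_sq_le (by rw [mul_pow, hsb]; nlinarith)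
      linarith
  · have : √a ≤ (1 + ε) * √b :=
      Real.sqrt_le_iff.2 ⟨by positivity, by rw [mul_pow, hsb]; nlinarith⟩
    linarith

lemma eventually_abs_formNorm_sub_le {X ι : Type*} [TopologicalSpace X] [Fintype ι] [DecidableEq ι]
    {g : X → Matrix ι ι ℝ} {x : X} (hg : ContinuousAt g x) (hx : (g x).PosDef)
    {ε : ℝ} (hε : 0 < ε) :
    ∀ᶠ z in 𝓝 x, ∀ w, |(g z).formNorm w - (g x).formNorm w| ≤ ε * (g x).formNorm w := by
  obtain ⟨c, hc, hcN⟩ := hx.exists_pos_mul_norm_le_formNorm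
  have hdist : Tendsto (fun z => ∑ i, ∑ j, |(g z - g x) i j|) (𝓝 x) (𝓝 0) := by
    have : ContinuousAt (fun z => ∑ i, ∑ j, |(g z - g x) i j|) x := by fun_prop
    simpa using this.tendsto
  filter_upwards [hdist.eventually (gt_mem_nhds (show (0 : ℝ) < ε * c ^ 2 by positivity))]
    with z hz w
  refine Real.abs_sqrt_sub_sqrt_le (hx.posSemidef.toBilin'_self_nonneg w) ?_
  calc |(g z).toBilin' w w - (g x).toBilin' w w|
      = |(g z - g x).toBilin' w w| := by rw [map_sub, LinearMap.sub_apply, LinearMap.sub_apply]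
    _ ≤ (∑ i, ∑ j, |(g z - g x) i j|) * ‖w‖ ^ 2 := Matrix.abs_toBilin'_self_le _ w
    _ ≤ ε * (c * ‖w‖) ^ 2 := by rw [mul_pow, ← mul_assoc]; gcongr
    _ ≤ ε * (g x).toBilin' w w := by
      rw [← hx.posSemidef.formNorm_sq]; gcongr; exact hcN w

lemma exists_mapsTo_closedBall_and_eq_one_or_dist_eq {X : Type*} [PseudoMetricSpace X]
    {γ : ℝ → X} (hγ : Continuous γ) {r : ℝ} (hr : 0 ≤ r) :
    ∃ T ∈ Icc (0 : ℝ) 1, MapsTo γ (Icc 0 T) (Metric.closedBall (γ 0) r) ∧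
      (T = 1 ∨ dist (γ T) (γ 0) = r) := by
  set S := Icc (0 : ℝ) 1 ∩ {t | r ≤ dist (γ t) (γ 0)}
  rcases S.eq_empty_or_nonempty with hS | hS
  · refine ⟨1, right_mem_Icc.2 zero_le_one, fun t ht => ?_, Or.inl rfl⟩
    by_contra h
    rw [Metric.mem_closedBall, not_le] at h
    exact eq_empty_iff_forall_notMem.1 hS t ⟨ht, h.le⟩
  have hSc : IsClosed S :=
    isClosed_Icc.inter (isClosed_le continuous_const (hγ.dist continuous_const))
  have hbdd : BddBelow S := ⟨0, fun t ht => ht.1.1⟩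
  have hTS : sInf S ∈ S := hSc.csInf_mem hS hbdd
  have hbefore : MapsTo γ (Ico 0 (sInf S)) (Metric.closedBall (γ 0) r) := fun t ht => by
    by_contra h
    rw [Metric.mem_closedBall, not_le] at h
    exact (csInf_le hbdd ⟨⟨ht.1, ht.2.le.trans hTS.1.2⟩, h.le⟩).not_gt ht.2
  have hmaps : MapsTo γ (Icc 0 (sInf S)) (Metric.closedBall (γ 0) r) := by
    rcases hTS.1.1.eq_or_lt with h | h
    · rintro t ⟨ht0, htT⟩
      obtain rfl : t = 0 := le_antisymm (h ▸ htT) ht0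
      exact Metric.mem_closedBall_self hr
    · rw [← closure_Ico h.ne]
      exact hbefore.closure_left hγ Metric.isClosed_closedBall
  exact ⟨sInf S, hTS.1, hmaps, Or.inr (le_antisymm (hmaps ⟨hTS.1.1, le_rfl⟩) hTS.2)⟩

section RiemannianDistance

variable {g : Vec n → Matrix (Fin n) (Fin n) ℝ} {U : Set (Vec n)} {x y : Vec n}

lemma pathLength_eq_integral_formNorm (g : Vec n → Matrix (Fin n) (Fin n) ℝ) {γ : ℝ → Vec n}
    (hγ : Differentiable ℝ γ) :
    pathLength g γ = ∫ t in (0:ℝ)..1, (g (γ t)).formNorm (deriv γ t) := by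
  refine intervalIntegral.integral_congr fun t _ => ?_
  have hderiv : deriv γ t = fun i => deriv (fun s => γ s i) t :=
    deriv_pi (differentiableAt_pi.1 (hγ t))
  simp only [Matrix.formNorm, ← Matrix.sum_sum_mul_eq_toBilin', hderiv]

lemma pathLength_nonneg (g : Vec n → Matrix (Fin n) (Fin n) ℝ) (γ : ℝ → Vec n) :
    0 ≤ pathLength g γ :=
  intervalIntegral.integral_nonneg zero_le_one fun _ _ => Real.sqrt_nonneg _

lemma riemDistIn_nonneg : 0 ≤ riemDistIn g U x y :=
  Real.iInf_nonneg fun _ => pathLength_nonneg _ _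

lemma riemDistIn_le_pathLength {γ : ℝ → Vec n} (hγ : ContDiff ℝ (⊤ : ℕ∞) γ) (h0 : γ 0 = x)
    (h1 : γ 1 = y) (hU : ∀ t ∈ Icc (0:ℝ) 1, γ t ∈ U) :
    riemDistIn g U x y ≤ pathLength g γ := by
  have hbdd : BddBelow (range fun γ : {γ : ℝ → Vec n // ContDiff ℝ (⊤ : ℕ∞) γ ∧ γ 0 = x ∧
      γ 1 = y ∧ ∀ t ∈ Set.Icc (0:ℝ) 1, γ t ∈ U} => pathLength g γ.1) :=
    ⟨0, forall_mem_range.2 fun γ => pathLength_nonneg g γ.1⟩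
  exact ciInf_le hbdd ⟨γ, hγ, h0, h1, hU⟩

lemma riemDistIn_le_of_segment_subset (hU : segment ℝ x y ⊆ U) {C : ℝ}
    (hC : ∀ z ∈ segment ℝ x y, (g z).formNorm (y - x) ≤ C) :
    riemDistIn g U x y ≤ C := by
  have hσ : ContDiff ℝ (⊤ : ℕ∞) fun s : ℝ => x + s • (y - x) := by fun_prop
  have hseg : ∀ s ∈ Icc (0:ℝ) 1, x + s • (y - x) ∈ segment ℝ x y := fun s hs =>
    segment_eq_image' ℝ x y ▸ mem_image_of_mem _ hs
  refine (riemDistIn_le_pathLength hσ (by simp) (by simp) fun s hs => hU (hseg s hs)).trans ?_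
  have hσ' : ∀ s : ℝ, deriv (fun s : ℝ => x + s • (y - x)) s = y - x := fun s =>
    (((hasDerivAt_id s).smul_const (y - x)).const_add x).deriv.trans (one_smul _ _)
  rw [pathLength_eq_integral_formNorm g (hσ.differentiable (by simp))]
  simp only [hσ']
  refine (Real.le_norm_self _).trans <| (intervalIntegral.norm_integral_le_of_norm_le_const
    (C := C) fun s hs => ?_).trans (by simp)
  rw [uIoc_of_le zero_le_one] at hs
  rw [Real.norm_of_nonneg (Matrix.formNorm_nonneg _ _)]
  exact hC _ (hseg s (Ioc_subset_Icc_self hs))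

open intervalIntegral in
lemma mul_min_le_pathLength (hg : ContinuousOn g U) (hx : (g x).PosSemidef) {r a c : ℝ}
    (hr : 0 ≤ r) (ha : 0 ≤ a)
    (hcmp : ∀ z ∈ Metric.closedBall x r, ∀ w, a * (g x).formNorm w ≤ (g z).formNorm w)
    (hc : ∀ v, c * ‖v‖ ≤ (g x).formNorm v) {γ : ℝ → Vec n} (hγ : ContDiff ℝ 1 γ)
    (h0 : γ 0 = x) (hU : ∀ t ∈ Icc (0:ℝ) 1, γ t ∈ U) :
    a * min ((g x).formNorm (γ 1 - x)) (c * r) ≤ pathLength g γ := by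
  subst h0
  have hγ' : Continuous (deriv γ) := hγ.continuous_deriv le_rfl
  have hint : ContinuousOn (fun t => (g (γ t)).formNorm (deriv γ t)) (Icc 0 1) :=
    (hg.comp hγ.continuous.continuousOn hU).matrix_formNorm hγ'.continuousOn
  -- Up to its first exit time `T` from the ball, `γ` is at least `a` times as long as the
  -- `g x`-length of `γ T - x`; and either `T = 1` or `γ T` lies on the sphere of radius `r`.
  obtain ⟨T, hT, hmaps, hend⟩ := exists_mapsTo_closedBall_and_eq_one_or_dist_eq hγ.continuous hr
  have hlen : a * (g (γ 0)).formNorm (γ T - γ 0) ≤ pathLength g γ :=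
    calc a * (g (γ 0)).formNorm (γ T - γ 0)
        ≤ a * ∫ t in 0..T, (g (γ 0)).formNorm (deriv γ t) := by
          gcongr; exact hx.formNorm_sub_le_integral hγ hT.1
      _ = ∫ t in 0..T, a * (g (γ 0)).formNorm (deriv γ t) :=
          (intervalIntegral.integral_const_mul _ _).symm
      _ ≤ ∫ t in 0..T, (g (γ t)).formNorm (deriv γ t) :=
          integral_mono_on hT.1
            (((continuous_const.matrix_formNorm hγ').const_mul a).intervalIntegrable _ _)
            ((hint.mono (Icc_subset_Icc_right hT.2)).intervalIntegrable_of_Icc hT.1)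
            fun t ht => hcmp _ (hmaps ht) _
      _ ≤ ∫ t in 0..1, (g (γ t)).formNorm (deriv γ t) :=
          integral_mono_interval le_rfl hT.1 hT.2
            (Eventually.of_forall fun _ => Matrix.formNorm_nonneg _ _)
            (hint.intervalIntegrable_of_Icc zero_le_one)
      _ = pathLength g γ := (pathLength_eq_integral_formNorm g (hγ.differentiable one_ne_zero)).symm
  rcases hend with rfl | hdist
  · exact (mul_le_mul_of_nonneg_left (min_le_left _ _) ha).trans hlen
  · refine (mul_le_mul_of_nonneg_left (min_le_right _ _) ha).trans
      ((mul_le_mul_of_nonneg_left ?_ ha).trans hlen)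
    rw [← hdist, dist_eq_norm]
    exact hc _

lemma exists_closedBall_subset_abs_formNorm_sub_le (hU : IsOpen U) (hg : ContinuousOn g U)
    (hx : x ∈ U) (hgx : (g x).PosDef) {ε : ℝ} (hε : 0 < ε) :
    ∃ r > 0, Metric.closedBall x r ⊆ U ∧ ∀ z ∈ Metric.closedBall x r, ∀ w,
      |(g z).formNorm w - (g x).formNorm w| ≤ ε * (g x).formNorm w := by
  obtain ⟨r, hr, hsub⟩ := Metric.nhds_basis_closedBall.mem_iff.1 <| inter_mem (hU.mem_nhds hx)
    (eventually_abs_formNorm_sub_le (hg.continuousAt (hU.mem_nhds hx)) hgx hε)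
  exact ⟨r, hr, hsub.trans inter_subset_left, fun z hz => (hsub hz).2⟩

lemma eventually_riemDistIn_le_mul_formNorm (hU : IsOpen U) (hg : ContinuousOn g U)
    (hx : x ∈ U) (hgx : (g x).PosDef) {b : ℝ} (hb : 1 < b) :
    ∀ᶠ y in 𝓝 x, riemDistIn g U x y ≤ b * (g x).formNorm (y - x) := by
  obtain ⟨r, hr, hball, hcmp⟩ :=
    exists_closedBall_subset_abs_formNorm_sub_le hU hg hx hgx (sub_pos.2 hb)
  filter_upwards [Metric.closedBall_mem_nhds x hr] with y hy
  have hseg : segment ℝ x y ⊆ Metric.closedBall x r :=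
    (convex_closedBall x r).segment_subset (Metric.mem_closedBall_self hr.le) hy
  refine riemDistIn_le_of_segment_subset (hseg.trans hball) fun z hz => ?_
  linarith [(abs_le.1 (hcmp z (hseg hz) (y - x))).2]

lemma eventually_mul_formNorm_le_riemDistIn (hU : IsOpen U) (hg : ContinuousOn g U)
    (hx : x ∈ U) (hgx : (g x).PosDef) {a : ℝ} (ha : a < 1) :
    ∀ᶠ y in 𝓝 x, a * (g x).formNorm (y - x) ≤ riemDistIn g U x y := by
  rcases le_or_gt a 0 with ha0 | ha0
  · exact Eventually.of_forall fun y =>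
      (mul_nonpos_of_nonpos_of_nonneg ha0 (Matrix.formNorm_nonneg _ _)).trans riemDistIn_nonneg
  obtain ⟨c, hc, hcN⟩ := hgx.exists_pos_mul_norm_le_formNorm
  obtain ⟨r, hr, hball, hcmp⟩ :=
    exists_closedBall_subset_abs_formNorm_sub_le hU hg hx hgx (sub_pos.2 ha)
  have hsmall : ∀ᶠ y in 𝓝 x, (g x).formNorm (y - x) < c * r := by
    have : Tendsto (fun y => (g x).formNorm (y - x)) (𝓝 x) (𝓝 ((g x).formNorm (x - x))) :=
      ((g x).continuous_formNorm.comp (continuous_sub_right x)).tendsto x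
    rw [sub_self, Matrix.formNorm_zero] at this
    exact this.eventually (gt_mem_nhds (by positivity))
  filter_upwards [Metric.closedBall_mem_nhds x hr, hsmall] with y hy hsmall
  have hseg : segment ℝ x y ⊆ U :=
    ((convex_closedBall x r).segment_subset (Metric.mem_closedBall_self hr.le) hy).trans hball
  have : Nonempty {γ : ℝ → Vec n // ContDiff ℝ (⊤ : ℕ∞) γ ∧ γ 0 = x ∧ γ 1 = y ∧
      ∀ t ∈ Set.Icc (0:ℝ) 1, γ t ∈ U} :=
    ⟨⟨fun s => x + s • (y - x), by fun_prop, by simp, by simp, fun s hs =>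
      hseg (segment_eq_image' ℝ x y ▸ mem_image_of_mem _ hs)⟩⟩
  refine le_ciInf fun ⟨γ, hγ, h0, h1, hγU⟩ => ?_
  have hlow := mul_min_le_pathLength hg hgx.posSemidef hr.le ha0.le
    (fun z hz w => by linarith [(abs_le.1 (hcmp z hz w)).1]) hcN
    (hγ.of_le (by simp)) h0 hγU
  rwa [h1, min_eq_left hsmall.le] at hlow

theorem tendsto_riemDistIn_div_formNorm (hU : IsOpen U) (hg : ContinuousOn g U) (hx : x ∈ U)
    (hgx : (g x).PosDef) :
    Tendsto (fun y => riemDistIn g U x y / (g x).formNorm (y - x)) (𝓝[≠] x) (𝓝 1) := by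
  refine tendsto_order.2 ⟨fun a ha => ?_, fun b hb => ?_⟩
  · obtain ⟨a', haa', ha'⟩ := exists_between ha
    filter_upwards [nhdsWithin_le_nhds (eventually_mul_formNorm_le_riemDistIn hU hg hx hgx ha'),
      self_mem_nhdsWithin] with y hy hyx
    exact haa'.trans_le ((le_div_iff₀ (hgx.formNorm_pos (sub_ne_zero.2 hyx))).2 hy)
  · obtain ⟨b', hb', hbb'⟩ := exists_between hb
    filter_upwards [nhdsWithin_le_nhds (eventually_riemDistIn_le_mul_formNorm hU hg hx hgx hb'),
      self_mem_nhdsWithin] with y hy hyx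
    exact ((div_le_iff₀ (hgx.formNorm_pos (sub_ne_zero.2 hyx))).2 hy).trans_lt hbb'

theorem tendsto_riemDistIn_div_of_hasDerivAt (hU : IsOpen U) (hg : ContinuousOn g U) (hx : x ∈ U)
    (hgx : (g x).PosDef) {c : ℝ → Vec n} {v : Vec n} (hc : HasDerivAt c v 0) (hc0 : c 0 = x)
    (hcx : Tendsto c (𝓝[>] 0) (𝓝[≠] x)) :
    Tendsto (fun t => riemDistIn g U x (c t) / t) (𝓝[>] 0) (𝓝 ((g x).formNorm v)) := by
  have hslope : Tendsto (fun t => (g x).formNorm (c t - x) / t) (𝓝[>] 0)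
      (𝓝 ((g x).formNorm v)) := by
    have := (((g x).continuous_formNorm).tendsto v).comp
      ((hasDerivAt_iff_tendsto_slope.1 hc).mono_left (nhdsWithin_mono _ fun t ht => ne_of_gt ht))
    refine this.congr' (eventually_nhdsWithin_of_forall fun t ht => ?_)
    simp [slope_def_module, hc0, Matrix.formNorm_smul, abs_of_pos (show 0 < t from ht),
      div_eq_inv_mul]
  have := ((tendsto_riemDistIn_div_formNorm hU hg hx hgx).comp hcx).mul hslope
  rw [one_mul] at this
  refine this.congr' ?_
  filter_upwards [hcx self_mem_nhdsWithin] with t hct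
  have := hgx.formNorm_pos (sub_ne_zero.2 hct)
  simp only [Function.comp_apply]
  field_simp

end RiemannianDistance

lemma tendsto_add_smul_nhdsWithin_diff_singleton {E : Type*} [NormedAddCommGroup E]
    [NormedSpace ℝ E] {U : Set E} {x u : E} (hU : U ∈ 𝓝 x) (hu : u ≠ 0) :
    Tendsto (fun t : ℝ => x + t • u) (𝓝[>] 0) (𝓝[U \ {x}] x) := by
  have hcont : Tendsto (fun t : ℝ => x + t • u) (𝓝 0) (𝓝 x) := by
    simpa using ((continuous_id.smul continuous_const).const_add x).tendsto (0 : ℝ)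
  refine tendsto_nhdsWithin_iff.2 ⟨hcont.mono_left nhdsWithin_le_nhds, ?_⟩
  filter_upwards [nhdsWithin_le_nhds (hcont hU), self_mem_nhdsWithin] with t htU ht
  exact ⟨htU, by simpa [(show (0:ℝ) < t from ht).ne'] using hu⟩

lemma Set.InjOn.tendsto_nhdsWithin_diff_singleton {X Y : Type*} [TopologicalSpace X]
    [TopologicalSpace Y] {f : X → Y} {U : Set X} {V : Set Y} {x : X} (hf : ContinuousAt f x)
    (hmaps : MapsTo f U V) (hinj : InjOn f U) (hx : x ∈ U) :
    Tendsto f (𝓝[U \ {x}] x) (𝓝[V \ {f x}] (f x)) :=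
  hf.continuousWithinAt.tendsto_nhdsWithin fun _ hy =>
    ⟨hmaps hy.1, fun h => hy.2 (hinj hy.1 hx h)⟩

lemma sq_eq_rpow_mul_sq_of_pow_eq {a b ρ : ℝ} {m : ℕ} (ha : 0 ≤ a) (hb : 0 ≤ b) (hρ : 0 ≤ ρ)
    (hm : m ≠ 0) (h : a ^ m = ρ ^ 2 * b ^ m) : a ^ 2 = ρ ^ ((4 : ℝ) / m) * b ^ 2 := by
  have ha' : a = (ρ ^ 2) ^ ((m : ℝ)⁻¹) * b := by
    rw [← Real.pow_rpow_inv_natCast ha hm, h, Real.mul_rpow (by positivity) (by positivity),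
      Real.pow_rpow_inv_natCast hb hm]
  rw [ha', mul_pow, ← Real.rpow_natCast _ 2, ← Real.rpow_mul (by positivity),
    ← Real.rpow_natCast ρ 2, ← Real.rpow_mul hρ]
  congr 2
  push_cast
  ring

lemma pow_eq_of_tendsto_mul_pow {α : Type*} {l : Filter α} [l.NeBot]
    {G₁ G₂ d₁ d₂ p₁ p₂ s : α → ℝ} {m : ℕ} {κ N₁ N₂ q₁ q₂ : ℝ} (hκ : κ ≠ 0) (hq₁ : q₁ ≠ 0)
    (hq₂ : q₂ ≠ 0) (hG₁ : Tendsto (fun t => G₁ t * d₁ t ^ m) l (𝓝 κ))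
    (hG₂ : Tendsto (fun t => G₂ t * d₂ t ^ m) l (𝓝 κ))
    (hd₁ : Tendsto (fun t => d₁ t / s t) l (𝓝 N₁)) (hd₂ : Tendsto (fun t => d₂ t / s t) l (𝓝 N₂))
    (hp₁ : Tendsto p₁ l (𝓝 q₁)) (hp₂ : Tendsto p₂ l (𝓝 q₂))
    (hG : ∀ᶠ t in l, G₁ t / p₁ t = G₂ t / p₂ t) :
    N₁ ^ m = q₂ / q₁ * N₂ ^ m := by
  -- since `G₁ p₂ = G₂ p₁` eventually, `h₁` and `h₂` are limits of the same function
  have h₁ := (hG₁.mul hp₂).mul (hd₂.pow m)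
  have h₂ := (hG₂.mul hp₁).mul (hd₁.pow m)
  have : κ * (q₂ * N₂ ^ m) = κ * (q₁ * N₁ ^ m) := by
    rw [← mul_assoc, ← mul_assoc]
    refine tendsto_nhds_unique h₁ (h₂.congr' ?_)
    filter_upwards [hG, hp₁.eventually_ne hq₁, hp₂.eventually_ne hq₂] with t ht h₁ h₂
    rw [div_eq_div_iff h₁ h₂] at ht
    rw [div_pow, div_pow]
    linear_combination (d₁ t ^ m * d₂ t ^ m / s t ^ m) * ht.symm
  rw [div_mul_eq_mul_div, eq_div_iff hq₁]
  linear_combination (mul_left_cancel₀ hκ this).symm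

theorem formNorm_pow_eq_of_scaled_greens_eq {U₁ U₂ : Set (Vec n)} (hU₁ : IsOpen U₁)
    (hU₂ : IsOpen U₂) {g₁ g₂ : Vec n → Matrix (Fin n) (Fin n) ℝ} (hg₁ : ContinuousOn g₁ U₁)
    (hg₂ : ContinuousOn g₂ U₂) {J : Vec n → Vec n} {L : Vec n →L[ℝ] Vec n} {x : Vec n}
    (hx : x ∈ U₁) (hJ : HasFDerivAt J L x) (hJmaps : MapsTo J U₁ U₂) (hJinj : InjOn J U₁)
    (hg₁x : (g₁ x).PosDef) (hg₂x : (g₂ (J x)).PosDef) {P₁ P₂ : Vec n → ℝ}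
    (hP₁ : ContinuousAt P₁ x) (hP₂ : ContinuousAt P₂ (J x)) (hP₁x : P₁ x ≠ 0)
    (hP₂x : P₂ (J x) ≠ 0) {G₁ G₂ : Vec n → Vec n → ℝ} {m : ℕ} {κ : ℝ} (hκ : κ ≠ 0)
    (hG₁ : Tendsto (fun y => G₁ x y * riemDistIn g₁ U₁ x y ^ m) (𝓝[U₁ \ {x}] x) (𝓝 κ))
    (hG₂ : Tendsto (fun y => G₂ (J x) y * riemDistIn g₂ U₂ (J x) y ^ m)
      (𝓝[U₂ \ {J x}] (J x)) (𝓝 κ))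
    (hH : ∀ y ∈ U₁, x ≠ y → G₁ x y / (P₁ x * P₁ y) = G₂ (J x) (J y) / (P₂ (J x) * P₂ (J y)))
    {u : Vec n} (hu : u ≠ 0) :
    (g₁ x).formNorm u ^ m = (P₂ (J x) / P₁ x) ^ 2 * (g₂ (J x)).formNorm (L u) ^ m := by
  have hc : HasDerivAt (fun t : ℝ => x + t • u) u 0 := by
    simpa using ((hasDerivAt_id (0:ℝ)).smul_const u).const_add x
  have hray₁ := tendsto_add_smul_nhdsWithin_diff_singleton (hU₁.mem_nhds hx) hu
  have hray₂ := (hJinj.tendsto_nhdsWithin_diff_singleton hJ.continuousAt hJmaps hx).comp hray₁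
  have hpow := pow_eq_of_tendsto_mul_pow hκ (mul_ne_zero hP₁x hP₁x) (mul_ne_zero hP₂x hP₂x)
    (hG₁.comp hray₁) (hG₂.comp hray₂)
    (tendsto_riemDistIn_div_of_hasDerivAt hU₁ hg₁ hx hg₁x hc (by simp)
      (hray₁.mono_right (nhdsWithin_mono _ (sdiff_subset_compl _ _))))
    (tendsto_riemDistIn_div_of_hasDerivAt hU₂ hg₂ (hJmaps hx) hg₂x
      (hJ.comp_hasDerivAt_of_eq 0 hc (by simp)) (by simp)
      (hray₂.mono_right (nhdsWithin_mono _ (sdiff_subset_compl _ _))))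
    (tendsto_const_nhds.mul (hP₁.tendsto.comp (hray₁.mono_right nhdsWithin_le_nhds)))
    (tendsto_const_nhds.mul (hP₂.tendsto.comp (hray₂.mono_right nhdsWithin_le_nhds)))
    (hray₁.eventually self_mem_nhdsWithin |>.mono fun t ht => hH _ ht.1 (Ne.symm ht.2))
  rw [hpow]
  ring

theorem scaled_greens_conjugation_implies_conformal_general
    (n : ℕ) (hn : 3 ≤ n)
    (U₁ U₂ : Set (Vec n)) (hU₁ : IsOpen U₁) (hU₂ : IsOpen U₂)
    (g₁ g₂ : Vec n → Matrix (Fin n) (Fin n) ℝ)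
    (hg₁ : ∀ j k, ContDiffOn ℝ (⊤ : ℕ∞) (fun x => g₁ x j k) U₁)
    (hg₂ : ∀ j k, ContDiffOn ℝ (⊤ : ℕ∞) (fun x => g₂ x j k) U₂)
    (hpos₁ : ∀ x ∈ U₁, (g₁ x).PosDef)
    (hpos₂ : ∀ x ∈ U₂, (g₂ x).PosDef)
    (J : Vec n → Vec n) (hJ : ContDiffOn ℝ (⊤ : ℕ∞) J U₁)
    (hJbij : Set.BijOn J U₁ U₂)
    (P₁ P₂ : Vec n → ℝ)
    (hP₁ : ContDiffOn ℝ (⊤ : ℕ∞) P₁ U₁) (hP₁pos : ∀ x ∈ U₁, 0 < P₁ x)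
    (hP₂ : ContDiffOn ℝ (⊤ : ℕ∞) P₂ U₂) (hP₂pos : ∀ x ∈ U₂, 0 < P₂ x)
    (G₁ G₂ : Vec n → Vec n → ℝ)
    (hGas₁ : ∀ x ∈ U₁, Filter.Tendsto
      (fun y => G₁ x y * riemDistIn g₁ U₁ x y ^ (n - 2))
      (nhdsWithin x (U₁ \ {x}))
      (nhds (1 / (((n:ℝ) - 2) * (2 * Real.pi ^ ((n:ℝ)/2) / Real.Gamma ((n:ℝ)/2))))))
    (hGas₂ : ∀ x ∈ U₂, Filter.Tendsto
      (fun y => G₂ x y * riemDistIn g₂ U₂ x y ^ (n - 2))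
      (nhdsWithin x (U₂ \ {x}))
      (nhds (1 / (((n:ℝ) - 2) * (2 * Real.pi ^ ((n:ℝ)/2) / Real.Gamma ((n:ℝ)/2))))))
    (hH : ∀ x ∈ U₁, ∀ y ∈ U₁, x ≠ y →
      G₁ x y / (P₁ x * P₁ y) = G₂ (J x) (J y) / (P₂ (J x) * P₂ (J y))) :
    ∀ x ∈ U₁, ∀ v w : Vec n,
      (∑ j, ∑ k, g₁ x j k * v j * w k)
        = (P₂ (J x) / P₁ x) ^ ((4:ℝ) / ((n:ℝ) - 2)) *
            ∑ j, ∑ k, g₂ (J x) j k * (fderiv ℝ J x v) j * (fderiv ℝ J x w) k := by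
  intro x hx
  have hJx : J x ∈ U₂ := hJbij.mapsTo hx
  have hJ' : HasFDerivAt J (fderiv ℝ J x) x :=
    ((hJ.contDiffAt (hU₁.mem_nhds hx)).differentiableAt (by simp)).hasFDerivAt
  have hm : (n : ℝ) - 2 = (n - 2 : ℕ) := by norm_num [Nat.cast_sub (by omega : 2 ≤ n)]
  have hκ : 1 / (((n:ℝ) - 2) * (2 * Real.pi ^ ((n:ℝ)/2) / Real.Gamma ((n:ℝ)/2))) ≠ 0 := by
    have : (2 : ℝ) < n := by exact_mod_cast hn
    exact one_div_ne_zero (mul_pos (by linarith) (by positivity)).ne'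
  simp only [Matrix.sum_sum_mul_eq_toBilin']
  refine Matrix.toBilin'_eq_mul_of_forall_self_eq (hpos₁ x hx).posSemidef.isSymm
    (hpos₂ _ hJx).posSemidef.isSymm (fderiv ℝ J x : Vec n →ₗ[ℝ] Vec n) fun u => ?_
  rcases eq_or_ne u 0 with rfl | hu
  · simp
  rw [← (hpos₁ x hx).posSemidef.formNorm_sq, ← (hpos₂ _ hJx).posSemidef.formNorm_sq, hm]
  refine sq_eq_rpow_mul_sq_of_pow_eq (Matrix.formNorm_nonneg _ _) (Matrix.formNorm_nonneg _ _)
    (div_pos (hP₂pos _ hJx) (hP₁pos x hx)).le (by omega) ?_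
  exact formNorm_pow_eq_of_scaled_greens_eq hU₁ hU₂
    (continuousOn_pi.2 fun j => continuousOn_pi.2 fun k => (hg₁ j k).continuousOn)
    (continuousOn_pi.2 fun j => continuousOn_pi.2 fun k => (hg₂ j k).continuousOn) hx hJ'
    hJbij.mapsTo hJbij.injOn (hpos₁ x hx) (hpos₂ _ hJx)
    (hP₁.continuousOn.continuousAt (hU₁.mem_nhds hx)) (hP₂.continuousOn.continuousAt
    (hU₂.mem_nhds hJx)) (hP₁pos x hx).ne' (hP₂pos _ hJx).ne' hκ (hGas₁ x hx) (hGas₂ _ hJx)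
    (hH x hx) hu

/-- a diffeomorphism intertwining the scaled Green's functions
`H_i = G_i/(P_i ⊗ P_i)`, where the `G_i` have the standard Green's function diagonal
asymptotics `G_i(x,y) ∼ c(n) d_i(x,y)^{2-n}` with `c(n) = 1/((n-2)ω_n)`, is conformal with
conformal factor `c(x) = (P₂(J(x))/P₁(x))^{4/(n-2)}`. -/
theorem scaled_greens_conjugation_implies_conformal
    (n : ℕ) (hn : 3 ≤ n)
    (U₁ U₂ : Set (Vec n)) (hU₁ : IsOpen U₁) (hU₂ : IsOpen U₂)
    (g₁ g₂ : Vec n → Matrix (Fin n) (Fin n) ℝ)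
    (hg₁ : ∀ j k, ContDiffOn ℝ (⊤ : ℕ∞) (fun x => g₁ x j k) U₁)
    (hg₂ : ∀ j k, ContDiffOn ℝ (⊤ : ℕ∞) (fun x => g₂ x j k) U₂)
    (hsymm₁ : ∀ x ∈ U₁, (g₁ x).IsSymm) (hpos₁ : ∀ x ∈ U₁, (g₁ x).PosDef)
    (hsymm₂ : ∀ x ∈ U₂, (g₂ x).IsSymm) (hpos₂ : ∀ x ∈ U₂, (g₂ x).PosDef)
    (J : Vec n → Vec n) (hJ : ContDiffOn ℝ (⊤ : ℕ∞) J U₁)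
    (hJbij : Set.BijOn J U₁ U₂)
    (K : Vec n → Vec n) (hK : ContDiffOn ℝ (⊤ : ℕ∞) K U₂)
    (hKJ : ∀ x ∈ U₁, K (J x) = x)
    (P₁ P₂ : Vec n → ℝ)
    (hP₁ : ContDiffOn ℝ (⊤ : ℕ∞) P₁ U₁) (hP₁pos : ∀ x ∈ U₁, 0 < P₁ x)
    (hP₂ : ContDiffOn ℝ (⊤ : ℕ∞) P₂ U₂) (hP₂pos : ∀ x ∈ U₂, 0 < P₂ x)
    (G₁ G₂ : Vec n → Vec n → ℝ)
    (hGas₁ : ∀ x ∈ U₁, Filter.Tendsto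
      (fun y => G₁ x y * riemDistIn g₁ U₁ x y ^ (n - 2))
      (nhdsWithin x (U₁ \ {x}))
      (nhds (1 / (((n:ℝ) - 2) * (2 * Real.pi ^ ((n:ℝ)/2) / Real.Gamma ((n:ℝ)/2))))))
    (hGas₂ : ∀ x ∈ U₂, Filter.Tendsto
      (fun y => G₂ x y * riemDistIn g₂ U₂ x y ^ (n - 2))
      (nhdsWithin x (U₂ \ {x}))
      (nhds (1 / (((n:ℝ) - 2) * (2 * Real.pi ^ ((n:ℝ)/2) / Real.Gamma ((n:ℝ)/2))))))
    (hH : ∀ x ∈ U₁, ∀ y ∈ U₁, x ≠ y →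
      G₁ x y / (P₁ x * P₁ y) = G₂ (J x) (J y) / (P₂ (J x) * P₂ (J y))) :
    ∀ x ∈ U₁, ∀ v w : Vec n,
      (∑ j, ∑ k, g₁ x j k * v j * w k)
        = (P₂ (J x) / P₁ x) ^ ((4:ℝ) / ((n:ℝ) - 2)) *
            ∑ j, ∑ k, g₂ (J x) j k * (fderiv ℝ J x v) j * (fderiv ℝ J x w) k :=
  scaled_greens_conjugation_implies_conformal_general n hn U₁ U₂ hU₁ hU₂ g₁ g₂ hg₁ hg₂ hpos₁ hpos₂ J
    hJ hJbij P₁ P₂ hP₁ hP₁pos hP₂ hP₂pos G₁ G₂ hGas₁ hGas₂ hH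
end
end
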